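/- arXiv:2504.13584 — 6 statements merged into one kernel-verified Lean document; each statement's English description precedes it below -/
import Mathlib

section
/- For words u and v over a finite alphabet A and an integer k ≥ 1, u and v are k-abelian equivalent (i.e., |u|_x = |v|_x for every word x of length at most k) if and only if either (a) |u| < k or |v| < k and u = v, or (b) |u|, |v| ≥ k, u and v have the same number of occurrences of every length-k factor, and the length-(k−1) prefixes and the length-(k−1) suffixes of u and v are equal. -/
/-- Number of (possibly overlapping) occurrences of `w` as a factor of `u`. -/
def countOcc {A : Type*} [DecidableEq A] (u w : List A) : ℕ :=
  (List.range (u.length + 1 - w.length)).countP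
    (fun i => decide ((u.drop i).take w.length = w))

/-- `k`-abelian equivalence: equal occurrence counts for all words of length between 1 and `k`. -/
def kAbEq {A : Type*} [DecidableEq A] (k : ℕ) (u v : List A) : Prop :=
  ∀ w : List A, 1 ≤ w.length → w.length ≤ k → countOcc u w = countOcc v w

/-- The length-`n` factor of the sequence `x` starting at position `i`. -/
def factorAt {A : Type*} (x : ℕ → A) (i n : ℕ) : List A :=
  (List.range n).map (fun j => x (i + j))

/-- The set of length-`n` factors of the sequence `x`. -/
def Fac {A : Type*} (x : ℕ → A) (n : ℕ) : Set (List A) :=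
  {u | ∃ i, u = factorAt x i n}

/-- `u` is a factor of the sequence `x`. -/
def IsFactor {A : Type*} (x : ℕ → A) (u : List A) : Prop :=
  ∃ i, u = factorAt x i u.length

/-- The complete invariant of `k`-abelian equivalence: all counts of factors of
length between `1` and `k`. -/
def kProfile {A : Type*} [DecidableEq A] (k : ℕ) (u : List A) : List A → ℕ :=
  fun w => if 1 ≤ w.length ∧ w.length ≤ k then countOcc u w else 0

/-- The complete invariant of exact `k`-abelian equivalence (for same-length words):
all counts of factors of length exactly `k`. -/
def exProfile {A : Type*} [DecidableEq A] (k : ℕ) (u : List A) : List A → ℕ :=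
  fun w => if w.length = k then countOcc u w else 0

/-- The `k`-abelian complexity: number of length-`n` factors of `x` up to `k`-abelian
equivalence. -/
noncomputable def kAbComplexity {A : Type*} [DecidableEq A] (x : ℕ → A) (k n : ℕ) : ℕ :=
  Set.ncard (kProfile k '' Fac x n)

/-- The exact `k`-abelian complexity: number of length-`n` factors of `x` up to exact
`k`-abelian equivalence. -/
noncomputable def exAbComplexity {A : Type*} [DecidableEq A] (x : ℕ → A) (k n : ℕ) : ℕ :=
  Set.ncard (exProfile k '' Fac x n)

/-- The abelian complexity: number of Parikh vectors of length-`n` factors of `x`. -/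
noncomputable def abComplexity {A : Type*} [DecidableEq A] (x : ℕ → A) (n : ℕ) : ℕ :=
  Set.ncard ((fun (u : List A) (a : A) => u.count a) '' Fac x n)

/-- The factor complexity of `x`. -/
noncomputable def factorComplexity {A : Type*} (x : ℕ → A) (n : ℕ) : ℕ :=
  Set.ncard (Fac x n)

/-!
Write `F_m(u)` for the list of length-`m` factors of `u` by starting position, so that
`u ∼_k v` says that `F_m(u)` and `F_m(v)` are permutations of each other for all `m ≤ k`.
Cutting every length-`(n+1)` factor down to its first `m` letters yields all length-`m` factors
except those starting inside the length-`n` suffix; hence `F_{n+1}` and that suffix determine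
`F_m` up to permutation. Conversely `F_n(u)` consists of the tails (resp. length-`n` prefixes)
of the members of `F_{n+1}(u)` together with the length-`n` prefix (resp. suffix) of `u`,
so cancelling in `F_n(u) ~ F_n(v)` recovers the borders. A word shorter than `k` is the only
factor of its own length.
-/

theorem List.eq_of_cons_perm_cons_of_perm {α : Type*} {a b : α} {l l' : List α}
    (h : (a :: l).Perm (b :: l')) (h' : l.Perm l') : a = b := by
  rw [← List.singleton_perm_singleton, ← List.perm_append_right_iff l']
  exact (h'.cons a).symm.trans h

section FactorList

variable {A : Type*}

def factorList (u : List A) (m : ℕ) : List (List A) :=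
  (List.range (u.length + 1 - m)).map fun i => (u.drop i).take m

@[simp]
theorem length_factorList (u : List A) (m : ℕ) :
    (factorList u m).length = u.length + 1 - m := by
  simp [factorList]

theorem length_of_mem_factorList {u z : List A} {m : ℕ} (hz : z ∈ factorList u m) :
    z.length = m := by
  obtain ⟨i, hi, rfl⟩ := List.mem_map.mp hz
  rw [List.mem_range] at hi
  simp only [List.length_take, List.length_drop]
  omega

theorem factorList_zero (u : List A) :
    factorList u 0 = List.replicate (u.length + 1) [] := by
  simp [factorList, List.map_const']

theorem factorList_of_length_eq {u : List A} {m : ℕ} (h : u.length = m) :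
    factorList u m = [u] := by
  subst h
  simp [factorList]

theorem factorList_eq_cons_map_tail {u : List A} {n : ℕ} (hn : n ≤ u.length) :
    factorList u n = u.take n :: (factorList u (n + 1)).map List.tail := by
  have hrange : u.length + 1 - n = (u.length + 1 - (n + 1)) + 1 := by omega
  simp only [factorList, hrange, List.range_succ_eq_map, List.map_cons, List.map_map]
  congr 1
  refine List.map_congr_left fun i _ => ?_
  simp [List.tail_take_eq_take_tail, List.tail_drop]

theorem factorList_eq_map_take_append {u : List A} {m n : ℕ} (hm : m ≤ n + 1) :
    factorList u m =
      (factorList u (n + 1)).map (List.take m) ++ factorList (u.drop (u.length - n)) m := by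
  have hrange : u.length + 1 - m =
      (u.length + 1 - (n + 1)) + ((u.drop (u.length - n)).length + 1 - m) := by
    simp only [List.length_drop]
    omega
  have hoffset : u.length + 1 - (n + 1) = u.length - n := by omega
  simp only [factorList, hrange, List.range_add, List.map_append, List.map_map]
  congr 1
  · refine List.map_congr_left fun i _ => ?_
    simp [List.take_take, Nat.min_eq_left hm]
  · refine List.map_congr_left fun j _ => ?_
    simp [List.drop_drop, hoffset]

theorem take_eq_of_perm_factorList {u v : List A} {n : ℕ} (hu : n ≤ u.length)
    (hv : n ≤ v.length) (hn : (factorList u n).Perm (factorList v n))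
    (hn₁ : (factorList u (n + 1)).Perm (factorList v (n + 1))) : u.take n = v.take n := by
  rw [factorList_eq_cons_map_tail hu, factorList_eq_cons_map_tail hv] at hn
  exact List.eq_of_cons_perm_cons_of_perm hn (hn₁.map _)

theorem drop_eq_of_perm_factorList {u v : List A} {n : ℕ} (hu : n ≤ u.length)
    (hv : n ≤ v.length) (hn : (factorList u n).Perm (factorList v n))
    (hn₁ : (factorList u (n + 1)).Perm (factorList v (n + 1))) :
    u.drop (u.length - n) = v.drop (v.length - n) := by
  have hsuffix (w : List A) (hw : n ≤ w.length) :
      factorList (w.drop (w.length - n)) n = [w.drop (w.length - n)] :=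
    factorList_of_length_eq (by rw [List.length_drop]; omega)
  rw [factorList_eq_map_take_append n.le_succ, factorList_eq_map_take_append (u := v) n.le_succ,
    hsuffix u hu, hsuffix v hv] at hn
  exact List.eq_of_cons_perm_cons_of_perm
    (List.perm_append_comm.trans (hn.trans List.perm_append_comm)) (hn₁.map _)

theorem perm_factorList_of_perm_of_drop_eq {u v : List A} {m n : ℕ} (hm : m ≤ n + 1)
    (h : (factorList u (n + 1)).Perm (factorList v (n + 1)))
    (hs : u.drop (u.length - n) = v.drop (v.length - n)) :
    (factorList u m).Perm (factorList v m) := by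
  rw [factorList_eq_map_take_append hm, factorList_eq_map_take_append (u := v) hm, hs]
  exact (h.map _).append_right _

theorem eq_of_forall_perm_factorList {u v : List A} {k : ℕ} (hk : 1 ≤ k)
    (h : ∀ m ≤ k, (factorList u m).Perm (factorList v m)) (hu : u.length < k) : u = v := by
  have hlen : u.length = v.length := by
    simpa using (h 1 hk).length_eq
  have hu := h u.length hu.le
  rwa [factorList_of_length_eq rfl, factorList_of_length_eq hlen.symm,
    List.singleton_perm_singleton] at hu

variable [DecidableEq A]

theorem count_factorList (u w : List A) :
    (factorList u w.length).count w = countOcc u w := by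
  simp [factorList, countOcc, List.count_eq_countP, List.countP_map, Function.comp_def,
    beq_eq_decide]

theorem perm_factorList_iff {u v : List A} {m : ℕ} :
    (factorList u m).Perm (factorList v m) ↔
      ∀ w : List A, w.length = m → countOcc u w = countOcc v w := by
  rw [List.perm_iff_count]
  refine ⟨fun h w hw => ?_, fun h w => ?_⟩
  · rw [← count_factorList, ← count_factorList, hw, h]
  · by_cases hw : w.length = m
    · rw [← hw, count_factorList, count_factorList, h w hw]
    · rw [List.count_eq_zero.mpr (hw ∘ length_of_mem_factorList),
        List.count_eq_zero.mpr (hw ∘ length_of_mem_factorList)]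

/-- For `m = 0` the list of factors only records the length of the word, which is already
determined by the factors of length `1`. -/
theorem kAbEq_iff_forall_perm_factorList {k : ℕ} (hk : 1 ≤ k) {u v : List A} :
    kAbEq k u v ↔ ∀ m ≤ k, (factorList u m).Perm (factorList v m) := by
  refine ⟨fun h m hm => ?_, fun h w hw₁ hw₂ => perm_factorList_iff.mp (h _ hw₂) w rfl⟩
  rcases Nat.eq_zero_or_pos m with rfl | hm₀
  · have hlen := (perm_factorList_iff.mpr fun w hw => h w hw.ge (hw ▸ hk)).length_eq
    simp only [length_factorList, Nat.add_sub_cancel] at hlen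
    rw [factorList_zero, factorList_zero, hlen]
  · exact perm_factorList_iff.mpr fun w hw => h w (hw ▸ hm₀) (hw ▸ hm)

end FactorList

/-- Characterization of `k`-abelian equivalence (Lemma 2.3(1) of Karhumäki et al.). -/
theorem kAbEq_iff_short_or_exact_and_borders {A : Type*} [DecidableEq A]
    (k : ℕ) (hk : 1 ≤ k) (u v : List A) :
    kAbEq k u v ↔
      (((u.length < k ∨ v.length < k) ∧ u = v) ∨
        (k ≤ u.length ∧ k ≤ v.length ∧
          (∀ w : List A, w.length = k → countOcc u w = countOcc v w) ∧
          u.take (k - 1) = v.take (k - 1) ∧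
          u.drop (u.length - (k - 1)) = v.drop (v.length - (k - 1)))) := by
  rw [kAbEq_iff_forall_perm_factorList hk, ← perm_factorList_iff]
  obtain ⟨n, rfl⟩ : ∃ n, k = n + 1 := ⟨k - 1, by omega⟩
  rw [Nat.add_sub_cancel]
  constructor
  · intro h
    by_cases hshort : u.length < n + 1 ∨ v.length < n + 1
    · refine Or.inl ⟨hshort, ?_⟩
      rcases hshort with hu | hv
      · exact eq_of_forall_perm_factorList hk h hu
      · exact (eq_of_forall_perm_factorList hk (fun m hm => (h m hm).symm) hv).symm
    · push Not at hshort
      obtain ⟨hu, hv⟩ := hshort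
      have hn := h n n.le_succ
      have hn₁ := h (n + 1) le_rfl
      exact Or.inr ⟨hu, hv, hn₁, take_eq_of_perm_factorList (by omega) (by omega) hn hn₁,
        drop_eq_of_perm_factorList (by omega) (by omega) hn hn₁⟩
  · rintro (⟨-, rfl⟩ | ⟨-, -, hexact, -, hsuffix⟩) m hm
    · exact List.Perm.refl _
    · exact perm_factorList_of_perm_of_drop_eq hm hexact hsuffix
end

section
/- For words u and v over a finite alphabet A and an integer k ≥ 1, u ∼_k v if and only if |u| = |v| and either (a) |u| < k and u = v, or (b) |u| ≥ k, u and v have the same number of occurrences of every length-k factor, and the length-(k−1) prefixes of u and v are equal. -/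
/-!
An occurrence of a word `w` with `|w| ≤ k` in `u` either lies inside the prefix of length `k - 1`
or is the suffix of exactly one length-`k` factor of `u`. So once the length-`k` factors of `u`
and `v` agree as multisets, the counts of `w` in `u` and `v` differ exactly as its counts in the
two prefixes do. This gives sufficiency; for necessity apply it to `w` = the prefix of `u`, which
must then also occur in the equally long prefix of `v`.
-/

section KAbelian

variable {A : Type*} [DecidableEq A]

lemma countOcc_of_length_eq {u w : List A} (h : u.length = w.length) :
    countOcc u w = if u = w then 1 else 0 := by
  rw [countOcc, show u.length + 1 - w.length = 1 by omega, List.range_one]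
  simp [← h]

lemma eq_of_length_eq_of_countOcc_eq {u v : List A} (hl : u.length = v.length)
    (hc : countOcc u u = countOcc v u) : u = v := by
  rw [countOcc_of_length_eq rfl, countOcc_of_length_eq hl.symm] at hc
  by_contra hne
  simp [Ne.symm hne] at hc

lemma countOcc_cons (b : A) (u w : List A) :
    countOcc (b :: u) w = (if (b :: u).take w.length = w then 1 else 0) + countOcc u w := by
  rcases le_or_gt w.length (u.length + 1) with hle | hlt
  · have hsplit : (b :: u).length + 1 - w.length = 1 + (u.length + 1 - w.length) := by
      simp only [List.length_cons]; omega
    rw [countOcc, hsplit, List.range_add, List.countP_append, List.countP_map, countOcc]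
    congr 1
    · simp [List.range_one]
    · refine List.countP_congr fun j _ => ?_
      simp [Function.comp, Nat.add_comm 1 j]
  · have hlong : ¬ (b :: u).take w.length = w := fun h => by
      have := congrArg List.length h
      simp only [List.length_take, List.length_cons] at this
      omega
    rw [countOcc, countOcc, show (b :: u).length + 1 - w.length = 0 by simp; omega,
      show u.length + 1 - w.length = 0 by omega]
    simp [hlong]

lemma countOcc_singleton (u : List A) (a : A) : countOcc u [a] = u.count a := by
  induction u with
  | nil => simp [countOcc]
  | cons b u ih =>
    rw [countOcc_cons, ih, List.count_cons, Nat.add_comm]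
    by_cases hba : b = a <;> simp [hba]

def factorsOfLength (k : ℕ) (u : List A) : List (List A) :=
  (List.range (u.length + 1 - k)).map fun j => (u.drop j).take k

omit [DecidableEq A] in
lemma length_of_mem_factorsOfLength {k : ℕ} {u z : List A} (hz : z ∈ factorsOfLength k u) :
    z.length = k := by
  obtain ⟨j, hj, rfl⟩ := List.mem_map.1 hz
  rw [List.mem_range] at hj
  simp only [List.length_take, List.length_drop]
  omega

lemma count_factorsOfLength {k : ℕ} (u : List A) {z : List A} (hz : z.length = k) :
    (factorsOfLength k u).count z = countOcc u z := by
  rw [factorsOfLength, List.count_eq_countP, List.countP_map, countOcc, hz]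
  refine List.countP_congr fun j _ => ?_
  simp [Function.comp_apply]

lemma factorsOfLength_perm {k : ℕ} {u v : List A}
    (hcnt : ∀ w : List A, w.length = k → countOcc u w = countOcc v w) :
    (factorsOfLength k u).Perm (factorsOfLength k v) := by
  refine List.perm_iff_count.2 fun z => ?_
  by_cases hz : z.length = k
  · rw [count_factorsOfLength u hz, count_factorsOfLength v hz, hcnt z hz]
  · rw [List.count_eq_zero.2 fun h => hz (length_of_mem_factorsOfLength h),
      List.count_eq_zero.2 fun h => hz (length_of_mem_factorsOfLength h)]

/-- The occurrence of `w` at position `k - |w| + j` is the suffix of the `j`-th length-`k`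
factor; those at earlier positions lie inside `u.take (k - 1)`. -/
lemma countOcc_eq_countOcc_take_add_countP_factorsOfLength {k : ℕ} (hk : 0 < k) (u w : List A)
    (hwk : w.length ≤ k) (hku : k ≤ u.length) :
    countOcc u w = countOcc (u.take (k - 1)) w +
      (factorsOfLength k u).countP fun z => z.drop (k - w.length) = w := by
  rw [countOcc, show u.length + 1 - w.length = (k - w.length) + (u.length + 1 - k) by omega,
    List.range_add, List.countP_append]
  congr 1
  · rw [countOcc, show (u.take (k - 1)).length + 1 - w.length = k - w.length by
      simp only [List.length_take]; omega]
    refine List.countP_congr fun i hi => ?_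
    rw [List.mem_range] at hi
    rw [List.drop_take, List.take_take, show min w.length (k - 1 - i) = w.length by omega]
  · rw [factorsOfLength, List.countP_map, List.countP_map]
    refine List.countP_congr fun j _ => ?_
    simp only [Function.comp, List.drop_take, List.drop_drop,
      show k - (k - w.length) = w.length by omega, Nat.add_comm j]

lemma countOcc_add_countOcc_take_eq {k : ℕ} (hk : 0 < k) {u v : List A}
    (hku : k ≤ u.length) (hkv : k ≤ v.length)
    (hcnt : ∀ w : List A, w.length = k → countOcc u w = countOcc v w)
    {w : List A} (hwk : w.length ≤ k) :
    countOcc u w + countOcc (v.take (k - 1)) w = countOcc v w + countOcc (u.take (k - 1)) w := by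
  have hperm := (factorsOfLength_perm hcnt).countP_eq fun z => z.drop (k - w.length) = w
  rw [countOcc_eq_countOcc_take_add_countP_factorsOfLength hk u w hwk hku,
    countOcc_eq_countOcc_take_add_countP_factorsOfLength hk v w hwk hkv, hperm]
  ring

namespace kAbEq

variable {k : ℕ} {u v : List A}

lemma perm (hk : 0 < k) (h : kAbEq k u v) : u.Perm v :=
  List.perm_iff_count.2 fun a => by
    simpa [countOcc_singleton] using h [a] le_rfl hk

lemma eq_of_length_lt (h : kAbEq k u v) (hlt : u.length < k) : u = v := by
  have hl := (h.perm (by omega)).length_eq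
  by_cases hu : u = []
  · subst hu
    exact (List.eq_nil_of_length_eq_zero hl.symm).symm
  · exact eq_of_length_eq_of_countOcc_eq hl (h u (List.length_pos_iff.2 hu) hlt.le)

lemma take_pred_eq (hk : 0 < k) (h : kAbEq k u v) (hku : k ≤ u.length) :
    u.take (k - 1) = v.take (k - 1) := by
  obtain rfl | hk1 := (Nat.one_le_iff_ne_zero.2 hk.ne').eq_or_lt
  · rfl
  have hl := (h.perm hk).length_eq
  have hp : (u.take (k - 1)).length = k - 1 := by simp only [List.length_take]; omega
  have hsplit := countOcc_add_countOcc_take_eq hk hku (hl ▸ hku)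
    (fun w hw => h w (by omega) hw.le) (w := u.take (k - 1)) (by omega)
  have hkab := h (u.take (k - 1)) (by omega) (by omega)
  exact eq_of_length_eq_of_countOcc_eq (by simp [hl]) (by omega)

end kAbEq

lemma kAbEq_of_countOcc_eq_of_take_eq {k : ℕ} (hk : 0 < k) {u v : List A}
    (hl : u.length = v.length) (hku : k ≤ u.length)
    (hcnt : ∀ w : List A, w.length = k → countOcc u w = countOcc v w)
    (hpre : u.take (k - 1) = v.take (k - 1)) : kAbEq k u v := fun w _ hwk => by
  have := countOcc_add_countOcc_take_eq hk hku (hl ▸ hku) hcnt hwk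
  rw [hpre] at this
  omega

end KAbelian

/-- Characterization of `k`-abelian equivalence (Lemma 2.3(2) of Karhumäki et al.). -/
theorem kAbEq_iff_length_eq_and_short_or_exact_and_prefix {A : Type*} [DecidableEq A]
    (k : ℕ) (hk : 1 ≤ k) (u v : List A) :
    kAbEq k u v ↔
      (u.length = v.length ∧
        ((u.length < k ∧ u = v) ∨
          (k ≤ u.length ∧
            (∀ w : List A, w.length = k → countOcc u w = countOcc v w) ∧
            u.take (k - 1) = v.take (k - 1)))) := by
  constructor
  · intro h
    refine ⟨(h.perm hk).length_eq, ?_⟩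
    rcases lt_or_ge u.length k with hlt | hge
    · exact Or.inl ⟨hlt, h.eq_of_length_lt hlt⟩
    · exact Or.inr ⟨hge, fun w hw => h w (by omega) hw.le, h.take_pred_eq hk hge⟩
  · rintro ⟨hl, ⟨-, rfl⟩ | ⟨hge, hcnt, hpre⟩⟩
    · exact fun _ _ _ => rfl
    · exact kAbEq_of_countOcc_eq_of_take_eq hk hl hge hcnt hpre
end

section
/- For every sequence x over a finite alphabet and every k ≥ 1, the exact k-abelian complexity of x satisfies ρ^{=k}_x(n + k − 1) = ρ^1_{B_k(x)}(n) for all n ≥ 1, where B_k(x) is the length-k sliding-block code of x. In particular, the map sending a length-n factor of B_k(x) to the corresponding length-(n+k−1) factor of x induces a bijection between Fac_n(B_k(x)) and Fac_{n+k−1}(x). -/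
/-- The length-`k` sliding-block code of `x`: its `n`-th letter is (the encoding of) the
length-`k` factor of `x` starting at position `n`. -/
def slidingBlock {A : Type*} (x : ℕ → A) (k : ℕ) : ℕ → List A :=
  fun n => factorAt x n k


section AuxSB

variable {A : Type*}

lemma factorAt_length (x : ℕ → A) (i n : ℕ) : (factorAt x i n).length = n := by
  simp [factorAt]

lemma factorAt_getElem (x : ℕ → A) (i n j : ℕ)
    (h' : j < (factorAt x i n).length) : (factorAt x i n)[j] = x (i + j) := by
  simp [factorAt]

lemma take_drop_factorAt (x : ℕ → A) (i m a b : ℕ) (h : b + a ≤ m) :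
    ((factorAt x i m).drop b).take a = factorAt x (i + b) a := by
  apply List.ext_getElem
  · simp [factorAt]; omega
  · intro j h1 h2
    rw [List.getElem_take, List.getElem_drop, factorAt_getElem, factorAt_getElem]
    congr 1; omega

lemma factorAt_succ (x : ℕ → A) (i n : ℕ) :
    factorAt x i (n + 1) = x i :: factorAt x (i + 1) n := by
  simp only [factorAt, List.range_succ_eq_map, List.map_cons, List.map_map]
  congr 1
  apply List.map_congr_left
  intro a _
  show x (i + (a + 1)) = x (i + 1 + a)
  congr 1; omega

lemma slidingBlock_map (x : ℕ → A) (k i n : ℕ) :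
    factorAt (slidingBlock x k) i n
      = (List.range n).map (fun j => factorAt x (i + j) k) := rfl

lemma factorAt_append (x : ℕ → A) (i a b : ℕ) :
    factorAt x i (a + b) = factorAt x i a ++ factorAt x (i + a) b := by
  simp only [factorAt, List.range_add, List.map_append, List.map_map]
  congr 1
  apply List.map_congr_left
  intro j hj
  simp [Function.comp]; congr 1; omega

lemma getD_factorAt (x : ℕ → A) (s k : ℕ) (hk : 1 ≤ k) (d : A) :
    (factorAt x s k).getD (k - 1) d = x (s + (k - 1)) := by
  rw [List.getD_eq_getElem _ _ (by rw [factorAt_length]; omega), factorAt_getElem]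

/-- The decoding map for the sliding-block code. -/
def gmap (x : ℕ → A) (k : ℕ) : List (List A) → List A :=
  fun u => u.headD [] ++ u.tail.map (fun b => b.getD (k - 1) (x 0))

lemma gmap_factorAt (x : ℕ → A) (k : ℕ) (hk : 1 ≤ k) (n : ℕ) (hn : 1 ≤ n) (i : ℕ) :
    gmap x k (factorAt (slidingBlock x k) i n) = factorAt x i (n + k - 1) := by
  obtain ⟨n', rfl⟩ : ∃ n', n = n' + 1 := ⟨n - 1, by omega⟩
  have h1 : n' + 1 + k - 1 = k + n' := by omega
  rw [factorAt_succ, h1, factorAt_append]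
  show (factorAt x i k) ++ _ = _
  congr 1
  rw [slidingBlock_map, List.tail_cons, List.map_map]
  apply List.map_congr_left
  intro j hj
  show (factorAt x (i + 1 + j) k).getD (k - 1) (x 0) = x (i + k + j)
  rw [getD_factorAt x _ k hk]
  congr 1; omega

lemma blocks_of_factor (x : ℕ → A) (k : ℕ) (hk : 1 ≤ k) (n : ℕ) (hn : 1 ≤ n) (i : ℕ) :
    factorAt (slidingBlock x k) i n
      = (List.range n).map (fun m => ((factorAt x i (n + k - 1)).drop m).take k) := by
  rw [slidingBlock_map]
  apply List.map_congr_left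
  intro m hm
  rw [List.mem_range] at hm
  exact (take_drop_factorAt x i (n + k - 1) k m (by omega)).symm

variable [DecidableEq A]

lemma countOcc_factor (x : ℕ → A) (k : ℕ) (hk : 1 ≤ k) (n : ℕ) (hn : 1 ≤ n) (i : ℕ)
    (w : List A) (hw : w.length = k) :
    countOcc (factorAt x i (n + k - 1)) w
      = @List.count (List A) instBEqOfDecidableEq w (factorAt (slidingBlock x k) i n) := by
  unfold countOcc
  rw [factorAt_length, hw]
  have h2 : n + k - 1 + 1 - k = n := by omega
  rw [h2, slidingBlock_map, @List.count_eq_countP (List A) instBEqOfDecidableEq, List.countP_map]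
  apply List.countP_congr
  intro m hm
  rw [List.mem_range] at hm
  simp only [Function.comp, decide_eq_true_eq, beq_iff_eq]
  rw [take_drop_factorAt x i (n + k - 1) k m (by omega)]

lemma count_eq_zero_of_len_ne (x : ℕ → A) (k n i : ℕ) (w : List A) (hw : w.length ≠ k) :
    @List.count (List A) instBEqOfDecidableEq w (factorAt (slidingBlock x k) i n) = 0 := by
  rw [@List.count_eq_zero (List A) instBEqOfDecidableEq, slidingBlock_map]
  intro hmem
  rw [List.mem_map] at hmem
  obtain ⟨j, _, h⟩ := hmem
  exact hw (by rw [← h, factorAt_length])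

end AuxSB

/-- The exact `k`-abelian complexity of `x` coincides with the abelian complexity of the
length-`k` sliding-block code of `x`: `ρ^{=k}_x(n+k-1) = ρ^1_{B_k(x)}(n)` for `n ≥ 1`.
In particular, the map sending a length-`n` factor of `B_k(x)` occurring at position `i`
to the length-`(n+k-1)` factor of `x` occurring at position `i` induces a bijection
between `Fac_n(B_k(x))` and `Fac_{n+k-1}(x)`. -/
theorem exAbComplexity_eq_abComplexity_slidingBlock {A : Type*} [Fintype A] [DecidableEq A]
    (x : ℕ → A) (k : ℕ) (hk : 1 ≤ k) :
    (∀ n, 1 ≤ n → exAbComplexity x k (n + k - 1) = abComplexity (slidingBlock x k) n) ∧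
      (∀ n, 1 ≤ n → ∃ g : List (List A) → List A,
        Set.BijOn g (Fac (slidingBlock x k) n) (Fac x (n + k - 1)) ∧
        ∀ i, g (factorAt (slidingBlock x k) i n) = factorAt x i (n + k - 1)) := by
  have main2 : ∀ n, 1 ≤ n → ∃ g : List (List A) → List A,
      Set.BijOn g (Fac (slidingBlock x k) n) (Fac x (n + k - 1)) ∧
      ∀ i, g (factorAt (slidingBlock x k) i n) = factorAt x i (n + k - 1) := by
    intro n hn
    refine ⟨gmap x k, ⟨?_, ?_, ?_⟩, fun i => gmap_factorAt x k hk n hn i⟩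
    · rintro v ⟨i, rfl⟩
      exact ⟨i, gmap_factorAt x k hk n hn i⟩
    · rintro v1 ⟨i, rfl⟩ v2 ⟨j, rfl⟩ h
      rw [gmap_factorAt x k hk n hn i, gmap_factorAt x k hk n hn j] at h
      rw [blocks_of_factor x k hk n hn i, blocks_of_factor x k hk n hn j, h]
    · rintro u ⟨i, rfl⟩
      exact ⟨factorAt (slidingBlock x k) i n, ⟨i, rfl⟩, gmap_factorAt x k hk n hn i⟩
  refine ⟨?_, main2⟩
  intro n hn
  unfold exAbComplexity abComplexity
  set F : (List A → ℕ) → (List A → ℕ) := fun f w => if w.length = k then f w else 0 with hF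
  have hpt : ∀ i, exProfile k (factorAt x i (n + k - 1))
      = F (fun a => @List.count (List A) instBEqOfDecidableEq a (factorAt (slidingBlock x k) i n)) := by
    intro i
    funext w
    by_cases hw : w.length = k
    · simp only [exProfile, hF, if_pos hw]
      exact countOcc_factor x k hk n hn i w hw
    · simp [exProfile, hF, hw]
  have hset : exProfile k '' Fac x (n + k - 1)
      = F '' ((fun (u : List (List A)) (a : List A) => @List.count (List A) instBEqOfDecidableEq a u) ''
          Fac (slidingBlock x k) n) := by
    apply Set.ext
    intro f
    constructor
    · rintro ⟨u, ⟨i, rfl⟩, rfl⟩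
      exact ⟨fun a => @List.count (List A) instBEqOfDecidableEq a (factorAt (slidingBlock x k) i n),
        ⟨factorAt (slidingBlock x k) i n, ⟨i, rfl⟩, rfl⟩, (hpt i).symm⟩
    · rintro ⟨p, ⟨v, ⟨i, rfl⟩, rfl⟩, rfl⟩
      exact ⟨factorAt x i (n + k - 1), ⟨i, rfl⟩, hpt i⟩
  rw [hset]
  have hinj : Set.InjOn F ((fun (u : List (List A)) (a : List A) => @List.count (List A) instBEqOfDecidableEq a u) ''
      Fac (slidingBlock x k) n) := by
    rintro f1 ⟨v1, ⟨i, rfl⟩, rfl⟩ f2 ⟨v2, ⟨j, rfl⟩, rfl⟩ h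
    funext w
    by_cases hw : w.length = k
    · have h2 := congrFun h w
      simpa [hF, hw] using h2
    · show @List.count (List A) instBEqOfDecidableEq w (factorAt (slidingBlock x k) i n)
        = @List.count (List A) instBEqOfDecidableEq w (factorAt (slidingBlock x k) j n)
      rw [count_eq_zero_of_len_ne x k n i w hw, count_eq_zero_of_len_ne x k n j w hw]
  exact Set.ncard_image_of_injOn hinj
end

section
/- Let τ be a primitive substitution whose level-2 induced substitution τ₂ (on the alphabet of length-2 factors of the fixed point) has characteristic polynomial X^m · P_θ(X) for a Pisot number θ and some m ≥ 0. Then the characteristic polynomial of τ itself equals X^ℓ · P_θ(X) for some 0 ≤ ℓ ≤ m; in particular τ is ultimately Pisot with the same Pisot root. -/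
/-- A Pisot number: a real algebraic integer greater than 1, all of whose other complex
conjugates have modulus strictly less than 1. -/
def IsPisot (θ : ℝ) : Prop :=
  1 < θ ∧ IsIntegral ℤ θ ∧
    ∀ z : ℂ, ((minpoly ℤ θ).map (Int.castRingHom ℂ)).IsRoot z → z ≠ (θ : ℂ) →
      ‖z‖ < 1

/-- The incidence matrix of a substitution `τ` (over `ℤ`). -/
def incidence {B : Type*} [Fintype B] [DecidableEq B] (τ : B → List B) : Matrix B B ℤ :=
  Matrix.of fun a b => ((τ a).count b : ℤ)

/-!
Let `M`, `M₂` be the incidence matrices of `τ`, `τ₂` and `P := (1 : Matrix A A ℤ).submatrix π id`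
the 0/1 matrix of `π`; the counting identity says exactly `M₂ * P = P * M`. Splitting
`A₂ ≃ A ⊕ ρ` along a section of `π` makes the first rows of `P` the identity, so conjugating `M₂`
by a unipotent block matrix makes it block upper triangular with diagonal block `M`. Hence
`χ_M ∣ χ_{M₂} = X^m P_θ`, and as `P_θ` is irreducible, `χ_M` is `X^ℓ P_θ` or a power of `X`.
In the latter case `M` is nilpotent; then `M₂^k P = P M^k = 0` and `M₂ ≥ 0` force `M₂` to be
nilpotent, so `χ_{M₂}` is a power of `X`, which does not vanish at `θ ≠ 0`.
-/

open Polynomial Matrix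

namespace Matrix

variable {ι κ ρ R : Type*} [Fintype ι] [Fintype κ] [Fintype ρ]
  [DecidableEq ι] [DecidableEq κ] [DecidableEq ρ]

theorem charpoly_dvd_of_mul_fromRows_eq [CommRing R] {N : Matrix (κ ⊕ ρ) (κ ⊕ ρ) R}
    {M : Matrix κ κ R} {P : Matrix ρ κ R}
    (h : N * fromRows (1 : Matrix κ κ R) P = fromRows 1 P * M) :
    M.charpoly ∣ N.charpoly := by
  rw [← fromBlocks_toBlocks N] at h ⊢
  set A := N.toBlocks₁₁
  set B := N.toBlocks₁₂
  set C := N.toBlocks₂₁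
  set D := N.toBlocks₂₂
  obtain ⟨hA, hC⟩ : A + B * P = M ∧ C + D * P = P * M := by
    rw [fromBlocks_mul_fromRows, fromRows_mul, fromRows_ext_iff] at h
    simpa using h
  let T : (Matrix (κ ⊕ ρ) (κ ⊕ ρ) R)ˣ :=
    ⟨fromBlocks 1 0 P 1, fromBlocks 1 0 (-P) 1, by simp [fromBlocks_multiply],
      by simp [fromBlocks_multiply]⟩
  have hT : T.val⁻¹ * fromBlocks A B C D * T.val = fromBlocks M B 0 (D - P * B) := by
    rw [← coe_units_inv]
    simp only [T, Units.inv_mk, fromBlocks_multiply]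
    congr 1
    · simpa using hA
    · simp
    · have hPM : P * A + P * (B * P) = C + D * P := by rw [← Matrix.mul_add, hA, hC]
      simp only [Matrix.one_mul, Matrix.mul_one, Matrix.add_mul, Matrix.neg_mul,
        Matrix.mul_assoc]
      calc _ = C + D * P - (P * A + P * (B * P)) := by abel
        _ = 0 := by rw [hPM, sub_self]
    · simp [sub_eq_neg_add]
  rw [← charpoly_units_conj' T, hT, charpoly_fromBlocks_zero₂₁]
  exact dvd_mul_right _ _

theorem charpoly_dvd_of_mul_submatrix_one_eq [CommRing R] {N : Matrix ι ι R} {M : Matrix κ κ R}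
    {π : ι → κ} (hπ : Function.Surjective π)
    (h : N * (1 : Matrix κ κ R).submatrix π id = (1 : Matrix κ κ R).submatrix π id * M) :
    M.charpoly ∣ N.charpoly := by
  let s := Function.surjInv hπ
  let e : κ ⊕ ↥(Set.range s)ᶜ ≃ ι :=
    ((Equiv.ofInjective s (Function.injective_surjInv hπ)).sumCongr (Equiv.refl _)).trans
      (Equiv.Set.sumCompl _)
  have hP : ((1 : Matrix κ κ R).submatrix π id).submatrix e id =
      fromRows 1 ((1 : Matrix κ κ R).submatrix (π ∘ Subtype.val) id) := by
    ext (a | r) b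
    · simp [one_apply, e, s, Equiv.Set.sumCompl_apply_inl, Function.surjInv_eq hπ]
    · simp [one_apply, e, Equiv.Set.sumCompl_apply_inr]
  rw [← charpoly_reindex e.symm N]
  apply charpoly_dvd_of_mul_fromRows_eq
  rw [← hP, reindex_apply, Equiv.symm_symm, ← submatrix_mul _ _ _ _ _ e.bijective,
    h, submatrix_mul _ _ _ _ _ Function.bijective_id, submatrix_id_id]

theorem isNilpotent_of_mul_submatrix_one_eq [CommRing R] [PartialOrder R] [IsOrderedRing R]
    {N : Matrix ι ι R} {M : Matrix κ κ R} {π : ι → κ} (hN : ∀ i j, 0 ≤ N i j)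
    (h : N * (1 : Matrix κ κ R).submatrix π id = (1 : Matrix κ κ R).submatrix π id * M)
    (hM : IsNilpotent M) : IsNilpotent N := by
  obtain ⟨k, hk⟩ := hM
  have hpow : ∀ n : ℕ, N ^ n * (1 : Matrix κ κ R).submatrix π id =
      (1 : Matrix κ κ R).submatrix π id * M ^ n := by
    intro n
    induction n with
    | zero => simp
    | succ n ih =>
      rw [pow_succ, pow_succ, Matrix.mul_assoc, h, ← Matrix.mul_assoc, ih, Matrix.mul_assoc]
  refine ⟨k, ext fun i j => ?_⟩
  have hij := congr_fun (congr_fun (hpow k) i) (π j)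
  rw [hk, Matrix.mul_zero, mul_apply] at hij
  have hterm := (Finset.sum_eq_zero_iff_of_nonneg fun l _ =>
    mul_nonneg (pow_apply_nonneg hN k i l) (by rw [submatrix_apply, one_apply]; split_ifs <;> simp)
    ).mp hij j (Finset.mem_univ j)
  simpa [one_apply] using hterm

end Matrix

namespace Polynomial

variable {R : Type*} [CommRing R] [IsDomain R]

theorem Monic.eq_X_pow_of_dvd_X_pow {q : R[X]} (hq : q.Monic) {m : ℕ} (h : q ∣ X ^ m) :
    ∃ k ≤ m, q = X ^ k := by
  obtain ⟨k, hk, hassoc⟩ := (dvd_prime_pow prime_X m).mp h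
  exact ⟨k, hk, eq_of_monic_of_associated hq (monic_X_pow k) hassoc⟩

theorem Monic.eq_X_pow_mul_or_eq_X_pow_of_dvd [UniqueFactorizationMonoid R] {p q : R[X]}
    (hq : q.Monic) (hp : Irreducible p) (hpm : p.Monic) {m : ℕ} (h : q ∣ X ^ m * p) :
    (∃ ℓ ≤ m, q = X ^ ℓ * p) ∨ ∃ k ≤ m, q = X ^ k := by
  by_cases hpq : p ∣ q
  · obtain ⟨r, rfl⟩ := hpq
    have hr : r ∣ X ^ m := by
      rw [mul_comm (X ^ m)] at h
      exact (mul_dvd_mul_iff_left hpm.ne_zero).mp h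
    obtain ⟨ℓ, hℓ, rfl⟩ := (hpm.of_mul_monic_left hq).eq_X_pow_of_dvd_X_pow hr
    exact Or.inl ⟨ℓ, hℓ, mul_comm _ _⟩
  · refine Or.inr (hq.eq_X_pow_of_dvd_X_pow ?_)
    refine UniqueFactorizationMonoid.dvd_of_dvd_mul_left_of_no_prime_factors hq.ne_zero
      (fun d hdq hdp hd => hpq ?_) h
    exact ((hp.dvd_iff.mp hdp).resolve_left hd.not_isUnit).dvd.trans hdq

end Polynomial

theorem incidence_mul_submatrix_one_eq {A A₂ : Type*} [Fintype A] [DecidableEq A] [Fintype A₂]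
    [DecidableEq A₂] (τ : A → List A) (τ₂ : A₂ → List A₂) (π : A₂ → A)
    (hrel : ∀ (i : A₂) (m : A),
      ∑ j ∈ Finset.univ.filter (fun j => π j = m), (τ₂ i).count j = (τ (π i)).count m) :
    incidence τ₂ * (1 : Matrix A A ℤ).submatrix π id =
      (1 : Matrix A A ℤ).submatrix π id * incidence τ := by
  ext i b
  have hcount := congrArg (Nat.cast : ℕ → ℤ) (hrel i b)
  push_cast [Finset.sum_filter] at hcount
  simpa [incidence, mul_apply, one_apply] using hcount

theorem charpoly_of_primitive_of_block2_ultimately_pisot_general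
    {A A₂ : Type*} [Fintype A] [DecidableEq A] [Fintype A₂] [DecidableEq A₂]
    (τ : A → List A) (τ₂ : A₂ → List A₂) (π : A₂ → A)
    (hsurj : Function.Surjective π)
    (hrel : ∀ (i : A₂) (m : A),
      ∑ j ∈ Finset.univ.filter (fun j => π j = m), (τ₂ i).count j = (τ (π i)).count m)
    (θ : ℝ) (hθ : IsPisot θ) (m : ℕ)
    (h₂ : (incidence τ₂).charpoly = Polynomial.X ^ m * minpoly ℤ θ) :
    ∃ ℓ ≤ m, (incidence τ).charpoly = Polynomial.X ^ ℓ * minpoly ℤ θ := by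
  have hθint : IsIntegral ℤ θ := hθ.2.1
  have hsemiconj := incidence_mul_submatrix_one_eq τ τ₂ π hrel
  have hdvd : (incidence τ).charpoly ∣ X ^ m * minpoly ℤ θ :=
    h₂ ▸ charpoly_dvd_of_mul_submatrix_one_eq hsurj hsemiconj
  refine ((incidence τ).charpoly_monic.eq_X_pow_mul_or_eq_X_pow_of_dvd
    (minpoly.irreducible hθint) (minpoly.monic hθint) hdvd).resolve_right ?_
  rintro ⟨k, -, hk⟩
  have hM : IsNilpotent (incidence τ) :=
    ⟨k, by simpa [hk] using (incidence τ).aeval_self_charpoly⟩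
  have hN : IsNilpotent (incidence τ₂) :=
    isNilpotent_of_mul_submatrix_one_eq (fun _ _ => Nat.cast_nonneg _) hsemiconj hM
  have hNchar : (incidence τ₂).charpoly = X ^ Fintype.card A₂ :=
    sub_eq_zero.mp (isNilpotent_charpoly_sub_pow_of_isNilpotent hN).eq_zero
  have hθpow := congrArg (aeval θ) (hNchar.symm.trans h₂)
  rw [map_pow, map_mul, map_pow, aeval_X, minpoly.aeval, mul_zero] at hθpow
  exact (pow_pos (zero_lt_one.trans hθ.1) _).ne' hθpow

/-- Let `τ` be a primitive substitution and `τ₂` the induced substitution on the alphabet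
of length-2 factors of its fixed point (the structural relation being recorded by the
first-letter projection `π` and the counting identity `hrel`). If the characteristic
polynomial of `τ₂` is `X^m · P_θ(X)` for a Pisot number `θ`, then the characteristic
polynomial of `τ` is `X^ℓ · P_θ(X)` for some `ℓ ≤ m`; in particular `τ` is ultimately
Pisot with the same Pisot root. -/
theorem charpoly_of_primitive_of_block2_ultimately_pisot
    {A A₂ : Type*} [Fintype A] [DecidableEq A] [Fintype A₂] [DecidableEq A₂]
    (τ : A → List A) (τ₂ : A₂ → List A₂) (π : A₂ → A)
    (hsurj : Function.Surjective π)
    (hrel : ∀ (i : A₂) (m : A),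
      ∑ j ∈ Finset.univ.filter (fun j => π j = m), (τ₂ i).count j = (τ (π i)).count m)
    (hprim : ∃ n : ℕ, ∀ a b : A, 0 < ((incidence τ) ^ n) a b)
    (θ : ℝ) (hθ : IsPisot θ) (m : ℕ)
    (h₂ : (incidence τ₂).charpoly = Polynomial.X ^ m * minpoly ℤ θ) :
    ∃ ℓ ≤ m, (incidence τ).charpoly = Polynomial.X ^ ℓ * minpoly ℤ θ :=
  charpoly_of_primitive_of_block2_ultimately_pisot_general τ τ₂ π hsurj hrel θ hθ m h₂
end

section
/- For any k ≥ 1, any Sturmian sequence is (k, k)-balanced: for all equal-length factors u, v of the sequence and every binary word w of length k, one has ||u|_w − |v|_w| ≤ k. -/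
namespace SKB

open Finset

variable (x : ℕ → Fin 2)

/-- number of ones in the window `[j, j+m)` -/
def S (j m : ℕ) : ℕ := ∑ t ∈ range m, (x (j + t)).val

/-- `x` is 1-balanced -/
def Bal : Prop := ∀ m j j', S x j m ≤ S x j' m + 1

lemma S_add (j m m' : ℕ) : S x j (m + m') = S x j m + S x (j + m) m' := by
  unfold S
  rw [Finset.sum_range_add]
  congr 1
  apply Finset.sum_congr rfl
  intro t _
  rw [add_assoc]

lemma S_split (j : ℕ) {t1 t2 : ℕ} (h : t1 ≤ t2) :
    S x j t2 = S x j t1 + S x (j + t1) (t2 - t1) := by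
  have h2 : t1 + (t2 - t1) = t2 := by omega
  calc S x j t2 = S x j (t1 + (t2 - t1)) := by rw [h2]
  _ = _ := S_add x j t1 (t2 - t1)

lemma S_succ (j m : ℕ) : S x j (m + 1) = S x j m + (x (j + m)).val := by
  rw [S_add]; simp [S]

lemma S_le_of_le (j : ℕ) {m m' : ℕ} (h : m ≤ m') : S x j m ≤ S x j m' := by
  obtain ⟨d, rfl⟩ := Nat.exists_eq_add_of_le h
  rw [S_add]; omega

/-- minimal number of ones among windows of length m -/
noncomputable def mu (m : ℕ) : ℕ := sInf {v | ∃ j, S x j m = v}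

lemma mu_exists (m : ℕ) : ∃ j, S x j m = mu x m := by
  have h : {v | ∃ j, S x j m = v}.Nonempty := ⟨S x 0 m, 0, rfl⟩
  exact Nat.sInf_mem h

lemma mu_le (m j : ℕ) : mu x m ≤ S x j m := Nat.sInf_le ⟨j, rfl⟩

/-- the excess of the window at `j` of length `m` over the minimum -/
noncomputable def eps (m j : ℕ) : ℕ := S x j m - mu x m

lemma S_eq (m j : ℕ) : S x j m = mu x m + eps x m j := by
  have := mu_le x m j
  unfold eps; omega

lemma eps_le_one (hB : Bal x) (m j : ℕ) : eps x m j ≤ 1 := by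
  obtain ⟨j0, hj0⟩ := mu_exists x m
  have := hB m j j0
  have := mu_le x m j
  unfold eps; omega

lemma eps_zero (j : ℕ) : eps x 0 j = 0 := by
  have h0 : S x j 0 = 0 := by simp [S]
  have := mu_le x 0 j
  unfold eps; omega

/-- the chain (sign) lemma -/
lemma chain (hB : Bal x) (k j j' : ℕ) :
    (∀ t ≤ k, eps x t j ≤ eps x t j') ∨ (∀ t ≤ k, eps x t j' ≤ eps x t j) := by
  by_contra hcon
  push_neg at hcon
  obtain ⟨⟨t1, ht1k, h1⟩, ⟨t2, ht2k, h2⟩⟩ := hcon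
  -- h1 : eps t1 j' < eps t1 j, h2 : eps t2 j < eps t2 j'
  have e1j := eps_le_one x hB t1 j
  have e1j' := eps_le_one x hB t1 j'
  have e2j := eps_le_one x hB t2 j
  have e2j' := eps_le_one x hB t2 j'
  have hv1 : eps x t1 j = 1 ∧ eps x t1 j' = 0 := by omega
  have hv2 : eps x t2 j = 0 ∧ eps x t2 j' = 1 := by omega
  have hne : t1 ≠ t2 := by
    intro h; rw [h] at hv1; omega
  rcases Nat.lt_or_ge t1 t2 with hlt | hge
  · -- window [t1, t2)
    have eA := S_split x j (le_of_lt hlt)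
    have eB := S_split x j' (le_of_lt hlt)
    have hb := hB (t2 - t1) (j' + t1) (j + t1)
    have s1 := S_eq x t1 j; have s2 := S_eq x t2 j
    have s3 := S_eq x t1 j'; have s4 := S_eq x t2 j'
    omega
  · have hlt : t2 < t1 := by omega
    have eA := S_split x j (le_of_lt hlt)
    have eB := S_split x j' (le_of_lt hlt)
    have hb := hB (t1 - t2) (j + t2) (j' + t2)
    have s1 := S_eq x t1 j; have s2 := S_eq x t2 j
    have s3 := S_eq x t1 j'; have s4 := S_eq x t2 j'
    omega

/-- `w` occurs in `x` at position `j` -/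
def occ (w : List (Fin 2)) (j : ℕ) : Prop := factorAt x j w.length = w

instance occ_decidable (w : List (Fin 2)) (j : ℕ) : Decidable (occ x w j) := by
  unfold occ; infer_instance

lemma factorAt_length {A : Type*} (y : ℕ → A) (i n : ℕ) : (factorAt y i n).length = n := by
  simp [factorAt]

lemma factorAt_getElem {A : Type*} (y : ℕ → A) (i n t : ℕ) (ht : t < n) :
    (factorAt y i n)[t]'(by simp [factorAt_length]; omega) = y (i + t) := by
  simp [factorAt]

lemma factorAt_eq_iff (j j' n : ℕ) :
    factorAt x j n = factorAt x j' n ↔ ∀ t < n, x (j + t) = x (j' + t) := by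
  constructor
  · intro h t ht
    have h1 : (factorAt x j n)[t]'(by simp [factorAt]; omega) =
        (factorAt x j' n)[t]'(by simp [factorAt]; omega) := by
      simp only [h]
    simpa [factorAt] using h1
  · intro h
    apply List.ext_getElem (by simp [factorAt])
    intro t h1 h2
    have ht : t < n := by simpa [factorAt] using h1
    simp only [factorAt, List.getElem_map, List.getElem_range]
    exact h t ht

lemma occ_letters {w : List (Fin 2)} {j j' : ℕ} (h : occ x w j) :
    occ x w j' ↔ ∀ t < w.length, x (j + t) = x (j' + t) := by
  unfold occ at *
  constructor
  · intro h'
    exact (factorAt_eq_iff x _ _ _).mp (by rw [h, h'])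
  · intro hl
    rw [← (factorAt_eq_iff x j j' w.length).mpr hl, h]

lemma letters_of_eps {k j j' : ℕ} (h : ∀ t ≤ k, eps x t j = eps x t j') :
    ∀ t < k, x (j + t) = x (j' + t) := by
  intro t ht
  have h1 : S x j (t+1) = S x j t + (x (j+t)).val := S_succ x j t
  have h2 : S x j' (t+1) = S x j' t + (x (j'+t)).val := S_succ x j' t
  have e1 := S_eq x t j; have e2 := S_eq x (t+1) j
  have e3 := S_eq x t j'; have e4 := S_eq x (t+1) j'
  have q1 := h t (by omega); have q2 := h (t+1) (by omega)
  have : (x (j+t)).val = (x (j'+t)).val := by omega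
  exact Fin.ext this

lemma S_eq_of_letters {k j j' : ℕ} (h : ∀ t < k, x (j + t) = x (j' + t)) :
    ∀ t ≤ k, S x j t = S x j' t := by
  intro t ht
  unfold S
  apply Finset.sum_congr rfl
  intro s hs
  rw [h s (by simp at hs; omega)]

/-- the occurrence characterization by eps-vectors -/
lemma occ_iff_eps (hB : Bal x) {w : List (Fin 2)} {j0 : ℕ} (h0 : occ x w j0) (j : ℕ) :
    occ x w j ↔ ∀ t ≤ w.length, eps x t j = eps x t j0 := by
  constructor
  · intro hj t ht
    have hl : ∀ t < w.length, x (j + t) = x (j0 + t) := (occ_letters x hj).mp h0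
    have := S_eq_of_letters x hl t ht
    have e1 := S_eq x t j; have e2 := S_eq x t j0
    omega
  · intro he
    rw [occ_letters x h0]
    intro t ht
    exact (letters_of_eps x he t ht).symm

lemma sum_eps_le (k j : ℕ) (hB : Bal x) : ∑ t ∈ range (k+1), eps x t j ≤ k + 1 := by
  calc ∑ t ∈ range (k+1), eps x t j ≤ ∑ _t ∈ range (k+1), 1 :=
        Finset.sum_le_sum (fun t _ => eps_le_one x hB t j)
  _ = k + 1 := by simp

/-- representation of the occurrence indicator as a difference of window counts -/
lemma rep (hB : Bal x) (w : List (Fin 2)) :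
    ∃ a b : ℕ, ∃ C : ℤ, a ≤ w.length ∧ b ≤ w.length ∧
      ∀ j, (if occ x w j then (1:ℤ) else 0) = (S x j a : ℤ) - (S x j b : ℤ) + C := by
  classical
  set k := w.length with hk
  by_cases hex : ∃ j0, occ x w j0
  swap
  · refine ⟨0, 0, 0, by omega, by omega, ?_⟩
    intro j
    rw [if_neg (fun h => hex ⟨j, h⟩)]
    simp
  obtain ⟨j0, hj0⟩ := hex
  have occ_eps : ∀ j, occ x w j ↔ ∀ t ≤ k, eps x t j = eps x t j0 :=
    fun j => occ_iff_eps x hB hj0 j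
  set Qn : Set ℕ := {j | ¬ occ x w j ∧ ∀ t ≤ k, eps x t j ≤ eps x t j0} with hQn
  set Qp : Set ℕ := {j | ¬ occ x w j ∧ ∀ t ≤ k, eps x t j0 ≤ eps x t j} with hQp
  have cover : ∀ j, ¬ occ x w j → (j ∈ Qn ∨ j ∈ Qp) := by
    intro j hj
    rcases chain x hB k j j0 with h | h
    · left; exact ⟨hj, h⟩
    · right; exact ⟨hj, h⟩
  set c : ℕ → ℕ := fun j => ∑ t ∈ range (k+1), eps x t j with hc
  -- selection for Qn
  have selN : Qn.Nonempty → ∃ ts ≤ k, eps x ts j0 = 1 ∧ ∀ j ∈ Qn, eps x ts j = 0 := by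
    rintro ⟨jn, hjn⟩
    set P : ℕ → Prop := fun m => ∃ j ∈ Qn, c j = m with hP
    have h1 : P (Nat.findGreatest P (k+1)) :=
      Nat.findGreatest_spec (sum_eps_le x k jn hB) ⟨jn, hjn, rfl⟩
    obtain ⟨jm, hjm, hcjm⟩ := h1
    have hmax : ∀ j ∈ Qn, c j ≤ c jm := by
      intro j hj
      rw [hcjm]
      exact Nat.le_findGreatest (sum_eps_le x k j hB) ⟨j, hj, rfl⟩
    have hdom : ∀ j ∈ Qn, ∀ t ≤ k, eps x t j ≤ eps x t jm := by
      intro j hj t ht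
      rcases chain x hB k j jm with h | h
      · exact h t ht
      · -- jm pointwise ≤ j ; sums equal ⇒ pointwise equal
        have hle : c jm ≤ c j := by
          apply Finset.sum_le_sum
          intro t' ht'
          exact h t' (by simp at ht'; omega)
        have hceq : c jm = c j := le_antisymm hle (hmax j hj)
        have heq := (Finset.sum_eq_sum_iff_of_le
          (fun t' ht' => h t' (by simp at ht'; omega))).mp hceq
        have := heq t (by simp; omega)
        omega
    have hne : ¬ (∀ t ≤ k, eps x t jm = eps x t j0) := fun h => hjm.1 ((occ_eps jm).mpr h)
    push_neg at hne
    obtain ⟨ts, hts, hneq⟩ := hne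
    have hle := hjm.2 ts hts
    have h0 := eps_le_one x hB ts j0
    have h1 := eps_le_one x hB ts jm
    refine ⟨ts, hts, by omega, ?_⟩
    intro j hj
    have := hdom j hj ts hts
    omega
  -- selection for Qp
  have selP : Qp.Nonempty → ∃ ts ≤ k, eps x ts j0 = 0 ∧ ∀ j ∈ Qp, eps x ts j = 1 := by
    rintro ⟨jp, hjp⟩
    set M : Set ℕ := {m | ∃ j ∈ Qp, c j = m} with hM
    have hMne : M.Nonempty := ⟨c jp, jp, hjp, rfl⟩
    obtain ⟨jm, hjm, hcjm⟩ : ∃ j ∈ Qp, c j = sInf M := Nat.sInf_mem hMne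
    have hmin : ∀ j ∈ Qp, c jm ≤ c j := by
      intro j hj
      rw [hcjm]
      exact Nat.sInf_le ⟨j, hj, rfl⟩
    have hdom : ∀ j ∈ Qp, ∀ t ≤ k, eps x t jm ≤ eps x t j := by
      intro j hj t ht
      rcases chain x hB k jm j with h | h
      · exact h t ht
      · have hle : c j ≤ c jm := by
          apply Finset.sum_le_sum
          intro t' ht'
          exact h t' (by simp at ht'; omega)
        have hceq : c j = c jm := le_antisymm hle (hmin j hj)
        have heq := (Finset.sum_eq_sum_iff_of_le
          (fun t' ht' => h t' (by simp at ht'; omega))).mp hceq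
        have := heq t (by simp; omega)
        omega
    have hne : ¬ (∀ t ≤ k, eps x t jm = eps x t j0) := fun h => hjm.1 ((occ_eps jm).mpr h)
    push_neg at hne
    obtain ⟨ts, hts, hneq⟩ := hne
    have hle := hjm.2 ts hts
    have h0 := eps_le_one x hB ts j0
    have h1 := eps_le_one x hB ts jm
    refine ⟨ts, hts, by omega, ?_⟩
    intro j hj
    have := hdom j hj ts hts
    have := eps_le_one x hB ts j
    omega
  by_cases hN : Qn.Nonempty <;> by_cases hP : Qp.Nonempty
  · -- both nonempty
    obtain ⟨a, hak, ha0, haQ⟩ := selN hN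
    obtain ⟨b, hbk, hb0, hbQ⟩ := selP hP
    refine ⟨a, b, (mu x b : ℤ) - (mu x a : ℤ), hak, hbk, ?_⟩
    intro j
    have sa := S_eq x a j; have sb := S_eq x b j
    by_cases hj : occ x w j
    · rw [if_pos hj]
      have e1 : eps x a j = 1 := by rw [(occ_eps j).mp hj a hak]; exact ha0
      have e2 : eps x b j = 0 := by rw [(occ_eps j).mp hj b hbk]; exact hb0
      omega
    · rw [if_neg hj]
      rcases cover j hj with hq | hq
      · have e1 : eps x a j = 0 := haQ j hq
        have e2 : eps x b j = 0 := by
          have := hq.2 b hbk; omega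
        omega
      · have e2 : eps x b j = 1 := hbQ j hq
        have e1 : eps x a j = 1 := by
          have := hq.2 a hak
          have := eps_le_one x hB a j
          omega
        omega
  · -- Qn nonempty, Qp empty
    obtain ⟨a, hak, ha0, haQ⟩ := selN hN
    refine ⟨a, 0, -(mu x a : ℤ), hak, by omega, ?_⟩
    intro j
    have sa := S_eq x a j
    have s0 : S x j 0 = 0 := by simp [S]
    by_cases hj : occ x w j
    · rw [if_pos hj]
      have e1 : eps x a j = 1 := by rw [(occ_eps j).mp hj a hak]; exact ha0
      omega
    · rw [if_neg hj]
      rcases cover j hj with hq | hq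
      · have e1 : eps x a j = 0 := haQ j hq
        omega
      · exact absurd ⟨j, hq⟩ hP
  · -- Qn empty, Qp nonempty
    obtain ⟨b, hbk, hb0, hbQ⟩ := selP hP
    refine ⟨0, b, (mu x b : ℤ) + 1, by omega, hbk, ?_⟩
    intro j
    have sb := S_eq x b j
    have s0 : S x j 0 = 0 := by simp [S]
    by_cases hj : occ x w j
    · rw [if_pos hj]
      have e2 : eps x b j = 0 := by rw [(occ_eps j).mp hj b hbk]; exact hb0
      omega
    · rw [if_neg hj]
      rcases cover j hj with hq | hq
      · exact absurd ⟨j, hq⟩ hN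
      · have e2 : eps x b j = 1 := hbQ j hq
        omega
  · -- both empty: every position is an occurrence
    refine ⟨0, 0, 1, by omega, by omega, ?_⟩
    intro j
    have s0 : S x j 0 = 0 := by simp [S]
    by_cases hj : occ x w j
    · rw [if_pos hj]; omega
    · rcases cover j hj with hq | hq
      · exact absurd ⟨j, hq⟩ hN
      · exact absurd ⟨j, hq⟩ hP

lemma countP_range_sum (p : ℕ → Bool) (n : ℕ) :
    (List.range n).countP p = ∑ i ∈ range n, if p i then 1 else 0 := by
  induction n with
  | zero => simp
  | succ n ih =>
      rw [List.range_succ, List.countP_append, Finset.sum_range_succ, ih]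
      simp [List.countP_cons]

lemma drop_take_factorAt (i n s : ℕ) (w : List (Fin 2)) (hsn : s + w.length ≤ n) :
    ((factorAt x i n).drop s).take w.length = factorAt x (i + s) w.length := by
  apply List.ext_getElem
  · simp [factorAt]
    omega
  · intro t h1 h2
    have ht : t < w.length := by
      simp [factorAt] at h2; omega
    simp [factorAt, List.getElem_take, List.getElem_drop]
    congr 1
    omega

lemma countOcc_factorAt (i n : ℕ) (w : List (Fin 2)) :
    countOcc (factorAt x i n) w
      = ∑ s ∈ range (n + 1 - w.length), (if occ x w (i + s) then 1 else 0) := by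
  classical
  unfold countOcc
  rw [factorAt_length, countP_range_sum]
  apply Finset.sum_congr rfl
  intro s hs
  have hs' : s < n + 1 - w.length := Finset.mem_range.mp hs
  have key : (((factorAt x i n).drop s).take w.length = w) ↔ occ x w (i + s) := by
    rw [drop_take_factorAt x i n s w (by omega)]
    exact Iff.rfl
  have hbool : (decide (((factorAt x i n).drop s).take w.length = w) = true) ↔ occ x w (i+s) := by
    rw [decide_eq_true_eq]; exact key
  rcases Decidable.em (occ x w (i+s)) with h | h
  · rw [if_pos h, if_pos (hbool.mpr h)]
  · rw [if_neg h, if_neg (fun hh => h (hbool.mp hh))]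

lemma swapS (j m d : ℕ) : ∑ s ∈ range m, S x (j + s) d = ∑ r ∈ range d, S x (j + r) m := by
  unfold S
  rw [Finset.sum_comm]
  apply Finset.sum_congr rfl
  intro t _
  apply Finset.sum_congr rfl
  intro s _
  rw [add_right_comm]

lemma main_bound (hB : Bal x) {k a b : ℕ} {C : ℤ} (ha : a ≤ k) (hb : b ≤ k)
    (w : List (Fin 2))
    (hrep : ∀ j, (if occ x w j then (1:ℤ) else 0) = (S x j a : ℤ) - (S x j b : ℤ) + C)
    (i i' m : ℕ) :
    |(∑ s ∈ range m, if occ x w (i + s) then (1:ℤ) else 0)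
      - ∑ s ∈ range m, if occ x w (i' + s) then (1:ℤ) else 0| ≤ (k : ℤ) := by
  classical
  have hsum : ∀ j, (∑ s ∈ range m, if occ x w (j + s) then (1:ℤ) else 0)
      = (∑ r ∈ range a, (S x (j + r) m : ℤ)) - (∑ r ∈ range b, (S x (j + r) m : ℤ)) + m * C := by
    intro j
    have h1 : (∑ s ∈ range m, if occ x w (j + s) then (1:ℤ) else 0)
        = ∑ s ∈ range m, ((S x (j + s) a : ℤ) - (S x (j + s) b : ℤ) + C) :=
      Finset.sum_congr rfl (fun s _ => hrep _)
    rw [h1]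
    have e1 : ∑ s ∈ range m, (S x (j + s) a : ℤ) = ∑ r ∈ range a, (S x (j + r) m : ℤ) := by
      have h := congrArg (fun n : ℕ => (n : ℤ)) (swapS x j m a)
      push_cast at h
      exact h
    have e2 : ∑ s ∈ range m, (S x (j + s) b : ℤ) = ∑ r ∈ range b, (S x (j + r) m : ℤ) := by
      have h := congrArg (fun n : ℕ => (n : ℤ)) (swapS x j m b)
      push_cast at h
      exact h
    rw [Finset.sum_add_distrib, Finset.sum_sub_distrib, e1, e2]
    simp [mul_comm]
  rw [hsum i, hsum i']
  set D : ℕ → ℤ := fun r => (S x (i + r) m : ℤ) - (S x (i' + r) m : ℤ) with hD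
  have habs : ∀ r, |D r| ≤ 1 := by
    intro r
    have h1 := hB m (i + r) (i' + r)
    have h2 := hB m (i' + r) (i + r)
    rw [hD, abs_le]
    constructor <;> simp <;> omega
  have key : ((∑ r ∈ range a, (S x (i + r) m : ℤ)) - (∑ r ∈ range b, (S x (i + r) m : ℤ)) + m * C)
      - ((∑ r ∈ range a, (S x (i' + r) m : ℤ)) - (∑ r ∈ range b, (S x (i' + r) m : ℤ)) + m * C)
      = (∑ r ∈ range a, D r) - (∑ r ∈ range b, D r) := by
    rw [hD, Finset.sum_sub_distrib, Finset.sum_sub_distrib]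
    ring
  rw [key]
  have ico_bound : ∀ (u v : ℕ), u ≤ v → v ≤ k → |∑ r ∈ Finset.Ico u v, D r| ≤ (k : ℤ) := by
    intro u v huv hvk
    calc |∑ r ∈ Finset.Ico u v, D r| ≤ ∑ r ∈ Finset.Ico u v, |D r| :=
          Finset.abs_sum_le_sum_abs _ _
    _ ≤ (Finset.Ico u v).card • (1:ℤ) := Finset.sum_le_card_nsmul _ _ _ (fun r _ => habs r)
    _ = ((v - u : ℕ) : ℤ) := by rw [Nat.card_Ico]; simp
    _ ≤ (k : ℤ) := by
        have : v - u ≤ k := by omega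
        exact_mod_cast this
  rcases le_total b a with hba | hab
  · have split := Finset.sum_range_add_sum_Ico D hba
    have : (∑ r ∈ range a, D r) - (∑ r ∈ range b, D r) = ∑ r ∈ Finset.Ico b a, D r := by
      omega
    rw [this]
    exact ico_bound b a hba ha
  · have split := Finset.sum_range_add_sum_Ico D hab
    have : (∑ r ∈ range a, D r) - (∑ r ∈ range b, D r) = -(∑ r ∈ Finset.Ico a b, D r) := by
      omega
    rw [this, abs_neg]
    exact ico_bound a b hab hb



lemma gcd_sub (a b : ℕ) (h : a ≤ b) : Nat.gcd a (b - a) = Nat.gcd a b := by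
  conv_rhs => rw [← Nat.sub_add_cancel h]
  rw [Nat.gcd_add_self_right]

lemma claimD : ∀ n a b : ℕ, ∀ T : ℕ → Fin 2, a + b ≤ n → 2 ≤ a → 2 ≤ b → Nat.gcd a b = 1 →
    (∀ t, t + a ≤ a + b - 3 → T t = T (t + a)) →
    (∀ t, t + b ≤ a + b - 3 → T t = T (t + b)) →
    T (a - 1) = T (b - 2) := by
  intro n
  induction n with
  | zero => intro a b T h ha hb; omega
  | succ n ih =>
    intro a b T hab ha hb hg pa pb
    rcases lt_trichotomy a b with hlt | heq | hgt
    · by_cases hba : b = a + 1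
      · have e : a - 1 = b - 2 := by omega
        rw [e]
      · have hba2 : a + 2 ≤ b := by omega
        have pb' : ∀ t, t + (b - a) ≤ a + (b - a) - 3 → T t = T (t + (b - a)) := by
          intro t ht
          have h1 : T t = T (t + b) := pb t (by omega)
          have h2 : T (t + (b - a)) = T (t + (b - a) + a) := pa _ (by omega)
          rw [h1, h2]; congr 1 <;> omega
        have pa' : ∀ t, t + a ≤ a + (b - a) - 3 → T t = T (t + a) := fun t ht => pa t (by omega)
        have hg' : Nat.gcd a (b - a) = 1 := by rw [gcd_sub a b (by omega)]; exact hg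
        have ihres := ih a (b - a) T (by omega) ha (by omega) hg' pa' pb'
        have lift : T (b - a - 2) = T (b - a - 2 + a) := pa _ (by omega)
        rw [ihres, lift]; congr 1 <;> omega
    · exfalso
      subst heq
      rw [Nat.gcd_self] at hg; omega
    · by_cases hab1 : a = b + 1
      · -- base: T (a-1) = T b = T 0 = T (b-2)
        subst hab1
        have step : ∀ j, j + 3 ≤ b → T j = T (j + 1) := by
          intro j hj
          have h1 : T j = T (j + (b + 1)) := pa j (by omega)
          have h2 : T (j + 1) = T (j + 1 + b) := pb (j + 1) (by omega)
          rw [h2]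
          rw [h1]; congr 1 <;> omega
        have const : ∀ j, j ≤ b - 2 → T j = T 0 := by
          intro j
          induction j with
          | zero => intro _; rfl
          | succ j ihj =>
            intro hj
            rw [← step j (by omega)]
            exact ihj (by omega)
        have h0 : T 0 = T b := by
          have := pb 0 (by omega)
          simpa using this
        have e1 : b + 1 - 1 = b := by omega
        rw [e1, ← h0, const (b - 2) (by omega)]
      · -- a > b, a ≥ b + 2
        have hab2 : b + 2 ≤ a := by omega
        have pa' : ∀ t, t + (a - b) ≤ (a - b) + b - 3 → T t = T (t + (a - b)) := by
          intro t ht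
          have h1 : T t = T (t + a) := pa t (by omega)
          have h2 : T (t + (a - b)) = T (t + (a - b) + b) := pb _ (by omega)
          rw [h1, h2]; congr 1 <;> omega
        have pb' : ∀ t, t + b ≤ (a - b) + b - 3 → T t = T (t + b) := fun t ht => pb t (by omega)
        have hg' : Nat.gcd (a - b) b = 1 := by
          rw [Nat.gcd_comm, gcd_sub b a (by omega), Nat.gcd_comm]; exact hg
        have ihres := ih (a - b) b T (by omega) (by omega) hb hg' pa' pb'
        have lift : T (a - b - 1) = T (a - b - 1 + b) := pb _ (by omega)
        rw [← ihres, lift]; congr 1 <;> omega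

lemma claimE : ∀ n a b : ℕ, ∀ T : ℕ → Fin 2, a + b ≤ n → 2 ≤ a → 2 ≤ b → 2 ≤ Nat.gcd a b →
    (∀ t, t + a ≤ a + b - 3 → T t = T (t + a)) →
    (∀ t, t + b ≤ a + b - 3 → T t = T (t + b)) →
    T (a - 1) = T (b - 1) := by
  intro n
  induction n with
  | zero => intro a b T h ha hb; omega
  | succ n ih =>
    intro a b T hab ha hb hg pa pb
    rcases lt_trichotomy a b with hlt | heq | hgt
    · have hd : Nat.gcd a b ∣ b - a := Nat.dvd_sub (Nat.gcd_dvd_right a b) (Nat.gcd_dvd_left a b)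
      have hba2 : 2 ≤ b - a := by
        have : Nat.gcd a b ≤ b - a := Nat.le_of_dvd (by omega) hd
        omega
      have pb' : ∀ t, t + (b - a) ≤ a + (b - a) - 3 → T t = T (t + (b - a)) := by
        intro t ht
        have h1 : T t = T (t + b) := pb t (by omega)
        have h2 : T (t + (b - a)) = T (t + (b - a) + a) := pa _ (by omega)
        rw [h1, h2]; congr 1 <;> omega
      have pa' : ∀ t, t + a ≤ a + (b - a) - 3 → T t = T (t + a) := fun t ht => pa t (by omega)
      have hg' : 2 ≤ Nat.gcd a (b - a) := by rw [gcd_sub a b (by omega)]; exact hg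
      have ihres := ih a (b - a) T (by omega) ha hba2 hg' pa' pb'
      have lift : T (b - a - 1) = T (b - a - 1 + a) := pa _ (by omega)
      rw [ihres, lift]; congr 1 <;> omega
    · rw [heq]
    · have hd : Nat.gcd a b ∣ a - b := Nat.dvd_sub (Nat.gcd_dvd_left a b) (Nat.gcd_dvd_right a b)
      have hba2 : 2 ≤ a - b := by
        have : Nat.gcd a b ≤ a - b := Nat.le_of_dvd (by omega) hd
        omega
      have pa' : ∀ t, t + (a - b) ≤ (a - b) + b - 3 → T t = T (t + (a - b)) := by
        intro t ht
        have h1 : T t = T (t + a) := pa t (by omega)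
        have h2 : T (t + (a - b)) = T (t + (a - b) + b) := pb _ (by omega)
        rw [h1, h2]; congr 1 <;> omega
      have pb' : ∀ t, t + b ≤ (a - b) + b - 3 → T t = T (t + b) := fun t ht => pb t (by omega)
      have hg' : 2 ≤ Nat.gcd (a - b) b := by
        rw [Nat.gcd_comm, gcd_sub b a (by omega), Nat.gcd_comm]; exact hg
      have ihres := ih (a - b) b T (by omega) hba2 hb hg' pa' pb'
      have lift : T (a - b - 1) = T (a - b - 1 + b) := pb _ (by omega)
      rw [← ihres, lift]; congr 1 <;> omega

/-- The final word-combinatorics contradiction. -/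
lemma period_word_contra {T : ℕ → Fin 2} {a b : ℕ} (ha : 2 ≤ a) (hb : 2 ≤ b)
    (pa : ∀ t, t + a ≤ a + b - 3 → T t = T (t + a))
    (pb : ∀ t, t + b ≤ a + b - 3 → T t = T (t + b))
    (h1 : T (a - 1) = 1) (h3 : T (b - 1) = 0) (h4 : T (b - 2) = 0) : False := by
  rcases Nat.lt_or_ge (Nat.gcd a b) 2 with hg | hg
  · have hg1 : Nat.gcd a b = 1 := by
      have := Nat.gcd_eq_zero_iff.not.mpr (by omega : ¬ (a = 0 ∧ b = 0))
      have h0 : Nat.gcd a b ≠ 0 := by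
        intro h; rw [Nat.gcd_eq_zero_iff] at h; omega
      omega
    have := claimD (a + b) a b T le_rfl ha hb hg1 pa pb
    rw [h1, h4] at this; exact absurd this (by decide)
  · have := claimE (a + b) a b T le_rfl ha hb hg pa pb
    rw [h1, h3] at this; exact absurd this (by decide)




/-- the window of length `m` at position `j`, as a function -/
def winf (m j : ℕ) : Fin m → Fin 2 := fun t => x (j + t.1)

noncomputable def FacT (m : ℕ) : Finset (Fin m → Fin 2) :=
  (Set.toFinite (Set.range (winf x m))).toFinset

lemma mem_FacT {m : ℕ} {u : Fin m → Fin 2} : u ∈ FacT x m ↔ ∃ j, winf x m j = u := by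
  simp [FacT, Set.Finite.mem_toFinset]

def app (m : ℕ) (u : Fin m → Fin 2) (c : Fin 2) : Fin (m + 1) → Fin 2 :=
  fun t => if h : t.1 < m then u ⟨t.1, h⟩ else c

def res (m : ℕ) (v : Fin (m + 1) → Fin 2) : Fin m → Fin 2 :=
  fun t => v ⟨t.1, by omega⟩

def pre (m : ℕ) (c : Fin 2) (u : Fin m → Fin 2) : Fin (m + 1) → Fin 2 :=
  fun t => if h : t.1 = 0 then c else u ⟨t.1 - 1, by omega⟩

def suf (m : ℕ) (v : Fin (m + 1) → Fin 2) : Fin m → Fin 2 :=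
  fun t => v ⟨t.1 + 1, by omega⟩

lemma res_app (m : ℕ) (u : Fin m → Fin 2) (c : Fin 2) : res m (app m u c) = u := by
  funext t; simp [res, app, t.2]

lemma app_last (m : ℕ) (u : Fin m → Fin 2) (c : Fin 2) : app m u c ⟨m, by omega⟩ = c := by
  simp [app]

lemma app_ne (m : ℕ) (u u' : Fin m → Fin 2) {c c' : Fin 2} (h : c ≠ c') :
    app m u c ≠ app m u' c' := by
  intro he
  apply h
  rw [← app_last m u c, ← app_last m u' c', he]

lemma suf_pre (m : ℕ) (u : Fin m → Fin 2) (c : Fin 2) : suf m (pre m c u) = u := by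
  funext t; simp [suf, pre]

lemma pre_zero (m : ℕ) (u : Fin m → Fin 2) (c : Fin 2) : pre m c u ⟨0, by omega⟩ = c := by
  simp [pre]

lemma pre_ne (m : ℕ) (u u' : Fin m → Fin 2) {c c' : Fin 2} (h : c ≠ c') :
    pre m c u ≠ pre m c' u' := by
  intro he
  apply h
  rw [← pre_zero m u c, ← pre_zero m u' c', he]

lemma winf_app (m j : ℕ) : winf x (m + 1) j = app m (winf x m j) (x (j + m)) := by
  funext t
  rcases Nat.lt_or_ge t.1 m with h | h
  · simp [winf, app, h]
  · have : t.1 = m := by omega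
    simp [winf, app, this]

lemma winf_pre (m j : ℕ) : winf x (m + 1) j = pre m (x j) (winf x m (j + 1)) := by
  funext t
  rcases Nat.eq_zero_or_pos t.1 with h | h
  · simp [winf, pre, h]
  · have h' : ¬ (t.1 = 0) := by omega
    simp only [winf, pre, h', dif_neg, not_false_iff]
    congr 1
    omega

/-- generic fiber-counting lower bound, two special fibers -/
lemma card_lower_two {α β : Type*} [DecidableEq α] [DecidableEq β] (F : Finset α) (G : Finset β)
    (f : α → β) (hmaps : ∀ a ∈ F, f a ∈ G) (hfull : ∀ b ∈ G, ∃ a ∈ F, f a = b)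
    {u u' : β} (hne : u ≠ u')
    {a0 a1 a0' a1' : α} (ha0 : a0 ∈ F) (ha1 : a1 ∈ F) (ha0' : a0' ∈ F) (ha1' : a1' ∈ F)
    (hf0 : f a0 = u) (hf1 : f a1 = u) (hf0' : f a0' = u') (hf1' : f a1' = u')
    (hne0 : a0 ≠ a1) (hne0' : a0' ≠ a1') :
    G.card + 2 ≤ F.card := by
  classical
  have hcard := Finset.card_eq_sum_card_fiberwise hmaps
  have hu : u ∈ G := hf0 ▸ hmaps a0 ha0
  have hu' : u' ∈ G := hf0' ▸ hmaps a0' ha0'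
  have hbound : ∀ b ∈ G, 1 + ((if b = u then 1 else 0) + (if b = u' then 1 else 0))
      ≤ (F.filter (fun a => f a = b)).card := by
    intro b hb
    by_cases h1 : b = u
    · subst h1
      rw [if_pos rfl, if_neg hne]
      have hsub : ({a0, a1} : Finset α) ⊆ F.filter (fun a => f a = b) := by
        intro a ha
        simp only [Finset.mem_insert, Finset.mem_singleton] at ha
        rcases ha with rfl | rfl <;> simp [Finset.mem_filter, ha0, ha1, hf0, hf1]
      have := Finset.card_le_card hsub
      rw [Finset.card_pair hne0] at this
      omega
    · by_cases h2 : b = u'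
      · subst h2
        rw [if_neg h1, if_pos rfl]
        have hsub : ({a0', a1'} : Finset α) ⊆ F.filter (fun a => f a = b) := by
          intro a ha
          simp only [Finset.mem_insert, Finset.mem_singleton] at ha
          rcases ha with rfl | rfl <;> simp [Finset.mem_filter, ha0', ha1', hf0', hf1']
        have := Finset.card_le_card hsub
        rw [Finset.card_pair hne0'] at this
        omega
      · rw [if_neg h1, if_neg h2]
        obtain ⟨a, haF, hab⟩ := hfull b hb
        have : a ∈ F.filter (fun a => f a = b) := by simp [Finset.mem_filter, haF, hab]
        have := Finset.card_pos.mpr ⟨a, this⟩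
        omega
  have hsum : ∑ b ∈ G, (1 + ((if b = u then 1 else 0) + (if b = u' then 1 else 0)))
      ≤ ∑ b ∈ G, (F.filter (fun a => f a = b)).card := Finset.sum_le_sum hbound
  have hval : ∑ b ∈ G, (1 + ((if b = u then 1 else 0) + (if b = u' then 1 else 0)))
      = G.card + 2 := by
    rw [Finset.sum_add_distrib, Finset.sum_add_distrib]
    rw [Finset.sum_ite_eq' G u (fun _ => 1), Finset.sum_ite_eq' G u' (fun _ => 1)]
    simp [hu, hu']
  omega

/-- generic fiber-counting lower bound, one special fiber -/
lemma card_lower_one {α β : Type*} [DecidableEq α] [DecidableEq β] (F : Finset α) (G : Finset β)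
    (f : α → β) (hmaps : ∀ a ∈ F, f a ∈ G) (hfull : ∀ b ∈ G, ∃ a ∈ F, f a = b)
    {u : β}
    {a0 a1 : α} (ha0 : a0 ∈ F) (ha1 : a1 ∈ F)
    (hf0 : f a0 = u) (hf1 : f a1 = u) (hne0 : a0 ≠ a1) :
    G.card + 1 ≤ F.card := by
  classical
  have hcard := Finset.card_eq_sum_card_fiberwise hmaps
  have hu : u ∈ G := hf0 ▸ hmaps a0 ha0
  have hbound : ∀ b ∈ G, 1 + (if b = u then 1 else 0)
      ≤ (F.filter (fun a => f a = b)).card := by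
    intro b hb
    by_cases h1 : b = u
    · subst h1
      rw [if_pos rfl]
      have hsub : ({a0, a1} : Finset α) ⊆ F.filter (fun a => f a = b) := by
        intro a ha
        simp only [Finset.mem_insert, Finset.mem_singleton] at ha
        rcases ha with rfl | rfl <;> simp [Finset.mem_filter, ha0, ha1, hf0, hf1]
      have := Finset.card_le_card hsub
      rw [Finset.card_pair hne0] at this
      omega
    · rw [if_neg h1]
      obtain ⟨a, haF, hab⟩ := hfull b hb
      have : a ∈ F.filter (fun a => f a = b) := by simp [Finset.mem_filter, haF, hab]
      have := Finset.card_pos.mpr ⟨a, this⟩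
      omega
  have hsum : ∑ b ∈ G, (1 + (if b = u then 1 else 0))
      ≤ ∑ b ∈ G, (F.filter (fun a => f a = b)).card := Finset.sum_le_sum hbound
  have hval : ∑ b ∈ G, (1 + (if b = u then 1 else 0)) = G.card + 1 := by
    rw [Finset.sum_add_distrib, Finset.sum_ite_eq' G u (fun _ => 1)]
    simp [hu]
  omega

lemma res_maps (m : ℕ) : ∀ v ∈ FacT x (m + 1), res m v ∈ FacT x m := by
  intro v hv
  rw [mem_FacT x] at hv ⊢
  obtain ⟨j, rfl⟩ := hv
  exact ⟨j, by rw [winf_app, res_app]⟩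

lemma res_full (m : ℕ) : ∀ u ∈ FacT x m, ∃ v ∈ FacT x (m + 1), res m v = u := by
  intro u hu
  rw [mem_FacT x] at hu
  obtain ⟨j, rfl⟩ := hu
  exact ⟨winf x (m + 1) j, (mem_FacT x).mpr ⟨j, rfl⟩, by rw [winf_app, res_app]⟩

/-- if two positions carry the same `m`-window but different next letters,
then the cardinality jumps -/
lemma rs_jump {m j j' : ℕ} (hw : winf x m j = winf x m j')
    (hl : x (j + m) ≠ x (j' + m)) :
    (FacT x m).card + 1 ≤ (FacT x (m + 1)).card := by
  classical
  have h0 : winf x (m + 1) j ∈ FacT x (m + 1) := (mem_FacT x).mpr ⟨j, rfl⟩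
  have h1 : winf x (m + 1) j' ∈ FacT x (m + 1) := (mem_FacT x).mpr ⟨j', rfl⟩
  exact card_lower_one (FacT x (m + 1)) (FacT x m) (res m) (res_maps x m)
    (res_full x m) h0 h1 (by rw [winf_app, res_app]) (by rw [winf_app, res_app, hw])
    (by rw [winf_app x m j, winf_app x m j', hw]; exact app_ne m _ _ hl)

/-- determinism: equal cardinalities forbid a right-special window -/
lemma ext_unique {m : ℕ} (hc : (FacT x (m + 1)).card ≤ (FacT x m).card) :
    ∀ j j', winf x m j = winf x m j' → x (j + m) = x (j' + m) := by
  intro j j' hw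
  by_contra hl
  have := rs_jump x hw hl
  omega

lemma card_FacT_zero : (FacT x 0).card = 1 := by
  have h : FacT x 0 = {winf x 0 0} := by
    ext u
    rw [mem_FacT x]
    constructor
    · rintro ⟨j, rfl⟩
      simp only [Finset.mem_singleton]
      funext t; exact absurd t.2 (by omega)
    · intro h
      simp only [Finset.mem_singleton] at h
      exact ⟨0, h.symm⟩
  rw [h, Finset.card_singleton]

/-- Morse–Hedlund: low complexity implies eventual periodicity -/
lemma mh {m : ℕ} (h : (FacT x m).card ≤ m) :
    ∃ p, 1 ≤ p ∧ ∃ N, ∀ n, N ≤ n → x (n + p) = x n := by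
  classical
  have hex : ∃ t, t < m ∧ (FacT x (t + 1)).card ≤ (FacT x t).card := by
    by_contra hc
    push_neg at hc
    have grow : ∀ t, t ≤ m → t + 1 ≤ (FacT x t).card := by
      intro t
      induction t with
      | zero => intro _; rw [card_FacT_zero]
      | succ t iht =>
        intro ht
        have h1 := hc t (by omega)
        have h2 := iht (by omega)
        omega
    have := grow m le_rfl
    omega
  obtain ⟨t, htm, hcle⟩ := hex
  have det := ext_unique x hcle
  rcases Nat.eq_zero_or_pos t with rfl | ht
  · refine ⟨1, le_rfl, 0, ?_⟩
    intro n _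
    have := det (n + 1) n (by funext s; exact absurd s.2 (by omega))
    simpa using this
  · obtain ⟨j1, j2, hne, heq⟩ := Finite.exists_ne_map_eq_of_infinite (fun j => winf x t j)
    have main : ∀ j1 j2 : ℕ, j1 < j2 → winf x t j1 = winf x t j2 →
        ∃ p, 1 ≤ p ∧ ∃ N, ∀ n, N ≤ n → x (n + p) = x n := by
      intro j1 j2 hlt heq
      have prop : ∀ d, winf x t (j1 + d) = winf x t (j2 + d) := by
        intro d
        induction d with
        | zero => simpa using heq
        | succ d ihd =>
          funext s
          show x (j1 + (d + 1) + s.1) = x (j2 + (d + 1) + s.1)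
          rcases Nat.lt_or_ge (s.1 + 1) t with hs | hs
          · have := congrFun ihd ⟨s.1 + 1, hs⟩
            simp only [winf] at this
            have e1 : j1 + d + (s.1 + 1) = j1 + (d + 1) + s.1 := by omega
            have e2 : j2 + d + (s.1 + 1) = j2 + (d + 1) + s.1 := by omega
            rw [e1, e2] at this
            exact this
          · have hst : s.1 = t - 1 := by omega
            have := det (j1 + d) (j2 + d) ihd
            have e1 : j1 + d + t = j1 + (d + 1) + s.1 := by omega
            have e2 : j2 + d + t = j2 + (d + 1) + s.1 := by omega
            rw [e1, e2] at this
            exact this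
      refine ⟨j2 - j1, by omega, j1, ?_⟩
      intro n hn
      have hd := congrFun (prop (n - j1)) ⟨0, ht⟩
      simp only [winf] at hd
      have e1 : j1 + (n - j1) + 0 = n := by omega
      have e2 : j2 + (n - j1) + 0 = n + (j2 - j1) := by omega
      rw [e1, e2] at hd
      exact hd.symm
    rcases Nat.lt_or_ge j1 j2 with h12 | h12
    · exact main j1 j2 h12 heq
    · have h21 : j2 < j1 := by omega
      exact main j2 j1 h21 heq.symm

/-- recurrence: every factor occurs beyond every bound -/
lemma recurrence (hap : ¬ ∃ p : ℕ, 1 ≤ p ∧ ∃ N : ℕ, ∀ n, N ≤ n → x (n + p) = x n)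
    (hcard : ∀ n, (FacT x n).card = n + 1) :
    ∀ (m j0 p0 : ℕ), ∃ j, p0 ≤ j ∧ winf x m j = winf x m j0 := by
  intro m j0 p0
  by_contra hno
  push_neg at hno
  set y : ℕ → Fin 2 := fun n => x (n + p0) with hy
  have hyw : ∀ j, winf y m j = winf x m (j + p0) := by
    intro j
    funext t
    show x (j + t.1 + p0) = x (j + p0 + t.1)
    congr 1
    omega
  have hsub : FacT y m ⊆ (FacT x m).erase (winf x m j0) := by
    intro v hv
    rw [mem_FacT y] at hv
    obtain ⟨j, hj⟩ := hv
    rw [Finset.mem_erase]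
    constructor
    · rw [← hj, hyw]
      exact hno (j + p0) (by omega)
    · rw [← hj, hyw]
      exact (mem_FacT x).mpr ⟨j + p0, rfl⟩
  have hcy : (FacT y m).card ≤ m := by
    calc (FacT y m).card ≤ ((FacT x m).erase (winf x m j0)).card := Finset.card_le_card hsub
    _ = (FacT x m).card - 1 := Finset.card_erase_of_mem ((mem_FacT x).mpr ⟨j0, rfl⟩)
    _ ≤ m := by rw [hcard m]; omega
  obtain ⟨p, hp, N, hN⟩ := mh y hcy
  apply hap
  refine ⟨p, hp, N + p0, ?_⟩
  intro n hn
  have := hN (n - p0) (by omega)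
  show x (n + p) = x n
  have e1 : n - p0 + p + p0 = n + p := by omega
  have e2 : n - p0 + p0 = n := by omega
  rw [hy] at this
  simp only at this
  rw [e1, e2] at this
  exact this

lemma S_le (j m : ℕ) : S x j m ≤ m := by
  unfold S
  calc ∑ t ∈ range m, (x (j + t)).val ≤ ∑ _t ∈ range m, 1 :=
        Finset.sum_le_sum (fun t _ => by have := (x (j + t)).is_lt; omega)
  _ = m := by simp

lemma S_one (j : ℕ) : S x j 1 = (x j).val := by simp [S]

section Extremes

variable {N : ℕ}

lemma min_prefix (hbelow : ∀ m, m < N → ∀ j j', S x j m ≤ S x j' m + 1)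
    {jM : ℕ} (hjM : S x jM N = mu x N + 2)
    {p : ℕ} (hp : S x p N = mu x N) :
    ∀ t, 1 ≤ t → t + 1 ≤ N → S x p t = mu x t := by
  intro t h1 h2
  have hle := mu_le x t p
  by_contra hne
  obtain ⟨jt, hjt⟩ := mu_exists x t
  have hup : S x p t ≤ mu x t + 1 := by
    have := hbelow t (by omega) p jt; omega
  have hS1 : S x p t = mu x t + 1 := by omega
  have e1 := S_split x p (show t ≤ N by omega)
  have e2 := S_split x jM (show t ≤ N by omega)
  have hMt : mu x t ≤ S x jM t := mu_le x t jM
  have hMt2 : S x jM t ≤ mu x t + 1 := by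
    have := hbelow t (by omega) jM jt; omega
  have hcon := hbelow (N - t) (by omega) (jM + t) (p + t)
  omega

lemma max_prefix (hbelow : ∀ m, m < N → ∀ j j', S x j m ≤ S x j' m + 1)
    {p : ℕ} (hp : S x p N = mu x N + 2) :
    ∀ t, 1 ≤ t → t + 1 ≤ N → S x p t = mu x t + 1 := by
  intro t h1 h2
  obtain ⟨j1, hj1⟩ := mu_exists x N
  have hle := mu_le x t p
  obtain ⟨jt, hjt⟩ := mu_exists x t
  have hup : S x p t ≤ mu x t + 1 := by have := hbelow t (by omega) p jt; omega
  by_contra hne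
  have hS1 : S x p t = mu x t := by omega
  have e1 := S_split x p (show t ≤ N by omega)
  have e2 := S_split x j1 (show t ≤ N by omega)
  have h1t := min_prefix x hbelow hp hj1 t h1 h2
  have hcon := hbelow (N - t) (by omega) (p + t) (j1 + t)
  omega

lemma min_letter (hbelow : ∀ m, m < N → ∀ j j', S x j m ≤ S x j' m + 1)
    {jM : ℕ} (hjM : S x jM N = mu x N + 2)
    {p : ℕ} (hp : S x p N = mu x N) :
    ∀ t, 1 ≤ t → t + 2 ≤ N → mu x (t + 1) = mu x t + (x (p + t)).val := by
  intro t h1 h2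
  have e1 := min_prefix x hbelow hjM hp t h1 (by omega)
  have e2 := min_prefix x hbelow hjM hp (t + 1) (by omega) (by omega)
  have e3 := S_succ x p t
  omega

lemma max_letter (hbelow : ∀ m, m < N → ∀ j j', S x j m ≤ S x j' m + 1)
    {p : ℕ} (hp : S x p N = mu x N + 2) :
    ∀ t, 1 ≤ t → t + 2 ≤ N → mu x (t + 1) = mu x t + (x (p + t)).val := by
  intro t h1 h2
  have e1 := max_prefix x hbelow hp t h1 (by omega)
  have e2 := max_prefix x hbelow hp (t + 1) (by omega) (by omega)
  have e3 := S_succ x p t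
  omega

lemma min_first (hbelow : ∀ m, m < N → ∀ j j', S x j m ≤ S x j' m + 1) (hN2 : 2 ≤ N)
    {jM : ℕ} (hjM : S x jM N = mu x N + 2)
    {p : ℕ} (hp : S x p N = mu x N) : x p = 0 := by
  have e1 := min_prefix x hbelow hjM hp 1 le_rfl (by omega)
  have e2 := max_prefix x hbelow hjM 1 le_rfl (by omega)
  have v1 := S_one x p
  have v2 := S_one x jM
  have h1 := (x jM).is_lt
  have h0 : (x p).val = 0 := by omega
  exact Fin.ext h0

lemma max_first (hbelow : ∀ m, m < N → ∀ j j', S x j m ≤ S x j' m + 1) (hN2 : 2 ≤ N)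
    {p : ℕ} (hp : S x p N = mu x N + 2) : x p = 1 := by
  obtain ⟨j1, hj1⟩ := mu_exists x N
  have e1 := min_prefix x hbelow hp hj1 1 le_rfl (by omega)
  have e2 := max_prefix x hbelow hp 1 le_rfl (by omega)
  have v1 := S_one x j1
  have v2 := S_one x p
  have h1 := (x p).is_lt
  have h0 : (x p).val = 1 := by omega
  exact Fin.ext h0

lemma min_last (hbelow : ∀ m, m < N → ∀ j j', S x j m ≤ S x j' m + 1) (hN2 : 2 ≤ N)
    {jM : ℕ} (hjM : S x jM N = mu x N + 2)
    {p : ℕ} (hp : S x p N = mu x N) : x (p + (N - 1)) = 0 := by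
  have e1 := min_prefix x hbelow hjM hp (N - 1) (by omega) (by omega)
  have e1' := max_prefix x hbelow hjM (N - 1) (by omega) (by omega)
  have e2 := S_split x p (show N - 1 ≤ N by omega)
  have e3 := S_split x jM (show N - 1 ≤ N by omega)
  have hone : N - (N - 1) = 1 := by omega
  rw [hone] at e2 e3
  rw [S_one] at e2 e3
  have h1 := (x (jM + (N - 1))).is_lt
  have h0 : (x (p + (N - 1))).val = 0 := by omega
  exact Fin.ext h0

lemma max_last (hbelow : ∀ m, m < N → ∀ j j', S x j m ≤ S x j' m + 1) (hN2 : 2 ≤ N)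
    {p : ℕ} (hp : S x p N = mu x N + 2) : x (p + (N - 1)) = 1 := by
  obtain ⟨j1, hj1⟩ := mu_exists x N
  have e1 := min_prefix x hbelow hp hj1 (N - 1) (by omega) (by omega)
  have e1' := max_prefix x hbelow hp (N - 1) (by omega) (by omega)
  have e2 := S_split x j1 (show N - 1 ≤ N by omega)
  have e3 := S_split x p (show N - 1 ≤ N by omega)
  have hone : N - (N - 1) = 1 := by omega
  rw [hone] at e2 e3
  rw [S_one] at e2 e3
  have h1 := (x (p + (N - 1))).is_lt
  have h2 := (x (j1 + (N - 1))).is_lt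
  have h0 : (x (p + (N - 1))).val = 1 := by omega
  exact Fin.ext h0

end Extremes

lemma card_bridge (hst : ∀ n, Set.ncard {u : List (Fin 2) | ∃ i, u = factorAt x i n} = n + 1) :
    ∀ n, (FacT x n).card = n + 1 := by
  intro n
  have hofn : ∀ i, factorAt x i n = List.ofFn (winf x n i) := by
    intro i
    apply List.ext_getElem (by simp [factorAt])
    intro t h1 h2
    simp [factorAt, winf]
  have himg : {u : List (Fin 2) | ∃ i, u = factorAt x i n}
      = List.ofFn '' (Set.range (winf x n)) := by
    ext u
    constructor
    · rintro ⟨i, rfl⟩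
      exact ⟨winf x n i, ⟨i, rfl⟩, (hofn i).symm⟩
    · rintro ⟨f, ⟨i, rfl⟩, rfl⟩
      exact ⟨i, (hofn i).symm⟩
  have h := hst n
  rw [himg, Set.ncard_image_of_injective _ List.ofFn_injective] at h
  rw [← h, FacT]
  exact (Set.ncard_eq_toFinset_card _ _).symm

lemma winf_suf (m j : ℕ) : suf m (winf x (m + 1) j) = winf x m (j + 1) := by
  funext t
  show x (j + (t.1 + 1)) = x (j + 1 + t.1)
  congr 1
  omega

lemma two_rs_jump {m j j' i i' : ℕ} (hw : winf x m j = winf x m j')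
    (hl : x (j + m) ≠ x (j' + m))
    (hw2 : winf x m i = winf x m i') (hl2 : x (i + m) ≠ x (i' + m))
    (hne : winf x m j ≠ winf x m i) :
    (FacT x m).card + 2 ≤ (FacT x (m + 1)).card := by
  classical
  exact card_lower_two (FacT x (m + 1)) (FacT x m) (res m) (res_maps x m) (res_full x m) hne
    ((mem_FacT x).mpr ⟨j, rfl⟩) ((mem_FacT x).mpr ⟨j', rfl⟩)
    ((mem_FacT x).mpr ⟨i, rfl⟩) ((mem_FacT x).mpr ⟨i', rfl⟩)
    (by rw [winf_app, res_app]) (by rw [winf_app, res_app, hw])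
    (by rw [winf_app, res_app]) (by rw [winf_app, res_app, hw2])
    (by rw [winf_app x m j, winf_app x m j', hw]; exact app_ne m _ _ hl)
    (by rw [winf_app x m i, winf_app x m i', hw2]; exact app_ne m _ _ hl2)

lemma two_ls_jump (m : ℕ) (hrec1 : ∀ u ∈ FacT x m, ∃ v ∈ FacT x (m + 1), suf m v = u)
    {j j' i i' : ℕ} (hj : 1 ≤ j) (hj' : 1 ≤ j') (hi : 1 ≤ i) (hi' : 1 ≤ i')
    (hw : winf x m j = winf x m j') (hl : x (j - 1) ≠ x (j' - 1))
    (hw2 : winf x m i = winf x m i') (hl2 : x (i - 1) ≠ x (i' - 1))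
    (hne : winf x m j ≠ winf x m i) :
    (FacT x m).card + 2 ≤ (FacT x (m + 1)).card := by
  classical
  have hmaps : ∀ v ∈ FacT x (m + 1), suf m v ∈ FacT x m := by
    intro v hv
    rw [mem_FacT x] at hv
    obtain ⟨p, rfl⟩ := hv
    rw [winf_suf]
    exact (mem_FacT x).mpr ⟨p + 1, rfl⟩
  have he : ∀ q : ℕ, 1 ≤ q → suf m (winf x (m + 1) (q - 1)) = winf x m q := by
    intro q hq
    have hq1 : q - 1 + 1 = q := by omega
    rw [winf_suf, hq1]
  have hfst : ∀ q : ℕ, winf x (m + 1) (q - 1) ⟨0, by omega⟩ = x (q - 1) := by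
    intro q
    show x (q - 1 + 0) = x (q - 1)
    congr 1
  exact card_lower_two (FacT x (m + 1)) (FacT x m) (suf m) hmaps hrec1 hne
    ((mem_FacT x).mpr ⟨j - 1, rfl⟩) ((mem_FacT x).mpr ⟨j' - 1, rfl⟩)
    ((mem_FacT x).mpr ⟨i - 1, rfl⟩) ((mem_FacT x).mpr ⟨i' - 1, rfl⟩)
    (he j hj) (by rw [he j' hj', hw]) (he i hi) (by rw [he i' hi', hw2])
    (by intro hcon; apply hl; rw [← hfst j, ← hfst j', hcon])
    (by intro hcon; apply hl2; rw [← hfst i, ← hfst i', hcon])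


def fl : Fin 2 → Fin 2 := fun c => if c = 0 then 1 else 0

lemma fl_inj : ∀ {a b : Fin 2}, fl a = fl b → a = b := by decide
lemma fl0 : fl 0 = 1 := by decide
lemma fl1 : fl 1 = 0 := by decide
lemma fin2_cases : ∀ c : Fin 2, c ≠ 0 → c = 1 := by decide
lemma fin2_zero_or_one : ∀ c : Fin 2, c = 0 ∨ c = 1 := by decide

lemma FacT_flip (m : ℕ) :
    FacT (fun n => fl (x n)) m = Finset.image (fun u => fl ∘ u) (FacT x m) := by
  ext u
  rw [mem_FacT]
  simp only [Finset.mem_image]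
  constructor
  · rintro ⟨j, rfl⟩
    exact ⟨winf x m j, (mem_FacT x).mpr ⟨j, rfl⟩, rfl⟩
  · rintro ⟨v, hv, rfl⟩
    obtain ⟨j, rfl⟩ := (mem_FacT x).mp hv
    exact ⟨j, rfl⟩

lemma card_flip (m : ℕ) : (FacT (fun n => fl (x n)) m).card = (FacT x m).card := by
  rw [FacT_flip]
  apply Finset.card_image_of_injective
  intro u u' h
  funext t
  exact fl_inj (congrFun h t)

/-- The main "case A" contradiction (corner (1,0) absent). -/
lemma caseA (z : ℕ → Fin 2) (L : ℕ) (T : ℕ → Fin 2)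
    (hap : ¬ ∃ p : ℕ, 1 ≤ p ∧ ∃ N0 : ℕ, ∀ n, N0 ≤ n → z (n + p) = z n)
    (hmin : ∀ p0, ∃ j, p0 ≤ j ∧ 1 ≤ j ∧ (∀ t, t < L → z (j + t) = T t) ∧
        z (j - 1) = 0 ∧ z (j + L) = 0)
    (hmax : ∀ p0, ∃ j, p0 ≤ j ∧ 1 ≤ j ∧ (∀ t, t < L → z (j + t) = T t) ∧
        z (j - 1) = 1 ∧ z (j + L) = 1)
    (hdet : ∀ j j', (∀ t, t < L → z (j + t) = z (j' + t)) →
        (¬ ∀ t, t < L → z (j + t) = T t) → z (j + L) = z (j' + L))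
    (hls : ∀ j j', 1 ≤ j → 1 ≤ j' → (∀ t, t < L → z (j + t) = z (j' + t)) →
        z (j - 1) ≠ z (j' - 1) → ∀ t, t < L → z (j + t) = T t)
    (hrecur : ∀ q p0 : ℕ, ∃ p, p0 ≤ p ∧ ∀ t, t < L + 1 → z (p + t) = z (q + t))
    (hcount : (FacT z (L + 1)).card = L + 2)
    (hno10 : ∀ j, 1 ≤ j → (∀ t, t < L → z (j + t) = T t) → z (j - 1) = 1 → z (j + L) = 1) :
    False := by
  classical
  -- next-visit distances
  have hex : ∀ j : ℕ, ∃ d, 1 ≤ d ∧ (∀ t, t < L → z (j + d + t) = T t) := by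
    intro j
    obtain ⟨p, hp1, _, hp3, _, _⟩ := hmin (j + 1)
    refine ⟨p - j, by omega, ?_⟩
    intro t ht
    have e : j + (p - j) + t = p + t := by omega
    rw [e]; exact hp3 t ht
  set gap : ℕ → ℕ := fun j => Nat.find (hex j) with hgapdef
  have gap_spec : ∀ j, 1 ≤ gap j ∧ (∀ t, t < L → z (j + gap j + t) = T t) :=
    fun j => Nat.find_spec (hex j)
  have gap_min : ∀ j d, d < gap j → ¬ (1 ≤ d ∧ ∀ t, t < L → z (j + d + t) = T t) :=
    fun j d h => Nat.find_min (hex j) h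
  have noVisitIn : ∀ j s, 0 < s → s < gap j → ¬ (∀ t, t < L → z (j + s + t) = T t) := by
    intro j s h1 h2 hv
    exact gap_min j s h2 ⟨h1, hv⟩
  -- the run lemma
  have run : ∀ j j', (∀ t, t < L → z (j + t) = T t) → (∀ t, t < L → z (j' + t) = T t) →
      z (j + L) = z (j' + L) →
      gap j = gap j' ∧ ∀ t, t < gap j + L → z (j + t) = z (j' + t) := by
    intro j j' hv hv' hpost
    have claim : ∀ s, s < gap j → s < gap j' → ∀ t, t < L + s + 1 → z (j + t) = z (j' + t) := by
      intro s
      induction s with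
      | zero =>
        intro _ _ t ht
        rcases Nat.lt_or_ge t L with h | h
        · rw [hv t h, hv' t h]
        · have he : t = L := by omega
          rw [he]; exact hpost
      | succ s ihs =>
        intro hs hs' t ht
        rcases Nat.lt_or_ge t (L + s + 1) with h | h
        · exact ihs (by omega) (by omega) t h
        · have hT : t = L + s + 1 := by omega
          have hwq : ∀ u, u < L → z (j + (s + 1) + u) = z (j' + (s + 1) + u) := by
            intro u hu
            have h0 := ihs (by omega) (by omega) (s + 1 + u) (by omega)
            have e1 : j + (s + 1) + u = j + (s + 1 + u) := by omega
            have e2 : j' + (s + 1) + u = j' + (s + 1 + u) := by omega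
            rw [e1, e2]; exact h0
          have hnv : ¬ ∀ u, u < L → z (j + (s + 1) + u) = T u :=
            noVisitIn j (s + 1) (by omega) hs
          have hd := hdet (j + (s + 1)) (j' + (s + 1)) hwq hnv
          have e1 : j + (s + 1) + L = j + t := by omega
          have e2 : j' + (s + 1) + L = j' + t := by omega
          rw [e1, e2] at hd
          exact hd
    have hgeq : gap j = gap j' := by
      by_contra hne
      rcases Nat.lt_or_ge (gap j) (gap j') with hlt | hge
      · have hvis : ∀ t, t < L → z (j' + gap j + t) = T t := by
          intro t ht
          have hg1 := (gap_spec j).1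
          have hc := claim (gap j - 1) (by omega) (by omega) (gap j + t) (by omega)
          have e1 : j + (gap j + t) = j + gap j + t := by omega
          have e2 : j' + (gap j + t) = j' + gap j + t := by omega
          rw [e1, e2] at hc
          rw [← hc]
          exact (gap_spec j).2 t ht
        exact noVisitIn j' (gap j) (by have := (gap_spec j).1; omega) hlt hvis
      · have hlt : gap j' < gap j := by omega
        have hvis : ∀ t, t < L → z (j + gap j' + t) = T t := by
          intro t ht
          have hg1 := (gap_spec j').1
          have hc := claim (gap j' - 1) (by omega) (by omega) (gap j' + t) (by omega)
          have e1 : j + (gap j' + t) = j + gap j' + t := by omega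
          have e2 : j' + (gap j' + t) = j' + gap j' + t := by omega
          rw [e1, e2] at hc
          rw [hc]
          exact (gap_spec j').2 t ht
        exact noVisitIn j (gap j') (by have := (gap_spec j').1; omega) hlt hvis
    refine ⟨hgeq, ?_⟩
    intro t ht
    have hg1 := (gap_spec j).1
    exact claim (gap j - 1) (by omega) (by omega) t (by omega)
  -- canonical visits
  obtain ⟨jA, _, hjA1, hjAv, hjApre, hjApost⟩ := hmin 0
  obtain ⟨jB, _, hjB1, hjBv, hjBpre, hjBpost⟩ := hmax 0
  set a := gap jA with hadef
  set b := gap jB with hbdef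
  have ha1 : 1 ≤ a := (gap_spec jA).1
  have hb1 : 1 ≤ b := (gap_spec jB).1
  have hvisA2 : ∀ t, t < L → z (jA + a + t) = T t := (gap_spec jA).2
  have hvisB2 : ∀ t, t < L → z (jB + b + t) = T t := (gap_spec jB).2
  have runA : ∀ j, (∀ t, t < L → z (j + t) = T t) → z (j + L) = 0 →
      gap j = a ∧ ∀ t, t < a + L → z (j + t) = z (jA + t) := by
    intro j hv hp
    have h := run j jA hv hjAv (by rw [hp, hjApost])
    have hg : gap j = a := h.1.trans hadef.symm
    exact ⟨hg, by rw [← hg]; exact h.2⟩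
  have runB : ∀ j, (∀ t, t < L → z (j + t) = T t) → z (j + L) = 1 →
      gap j = b ∧ ∀ t, t < b + L → z (j + t) = z (jB + t) := by
    intro j hv hp
    have h := run j jB hv hjBv (by rw [hp, hjBpost])
    have hg : gap j = b := h.1.trans hbdef.symm
    exact ⟨hg, by rw [← hg]; exact h.2⟩
  -- e_B = 0
  have heB : z (jB + (b - 1)) = 0 := by
    by_contra hcon
    have heB1 : z (jB + (b - 1)) = 1 := fin2_cases _ hcon
    -- all iterates are post-1 visits
    have kb : ∀ i : ℕ, (∀ t, t < L → z (jB + i * b + t) = T t) ∧ z (jB + i * b + L) = 1 := by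
      intro i
      induction i with
      | zero => simpa using ⟨hjBv, hjBpost⟩
      | succ i ih =>
        obtain ⟨hv, hp⟩ := ih
        have hrun := runB (jB + i * b) hv hp
        have hvnext : ∀ t, t < L → z (jB + i * b + b + t) = T t := by
          intro t ht
          have := (gap_spec (jB + i * b)).2 t ht
          rw [hrun.1] at this
          exact this
        have hprenext : z (jB + i * b + b - 1) = 1 := by
          have hc := hrun.2 (b - 1) (by omega)
          have e : jB + i * b + (b - 1) = jB + i * b + b - 1 := by omega
          rw [e] at hc
          rw [hc]
          exact heB1
        have hpost : z (jB + i * b + b + L) = 1 :=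
          hno10 (jB + i * b + b) (by omega) hvnext hprenext
        have e : jB + (i + 1) * b = jB + i * b + b := by ring
        rw [e]
        exact ⟨hvnext, hpost⟩
    -- periodicity
    apply hap
    refine ⟨b, hb1, jB, ?_⟩
    intro n hn
    set d := n - jB with hddef
    set i := d / b with hidef
    set s := d % b with hsdef
    have hdm := Nat.div_add_mod d b
    have hds : d = i * b + s ∧ s < b := by
      constructor
      · rw [hidef, hsdef, Nat.mul_comm]; omega
      · rw [hsdef]; exact Nat.mod_lt _ (by omega)
    have hn1 : n = jB + i * b + s := by omega
    have hn2 : n + b = jB + (i + 1) * b + s := by rw [hn1]; ring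
    have hc1 := (runB (jB + i * b) (kb i).1 (kb i).2).2 s (by omega)
    have hc2 := (runB (jB + (i + 1) * b) (kb (i + 1)).1 (kb (i + 1)).2).2 s (by omega)
    have e1 : jB + i * b + s = n := by omega
    have e2 : jB + (i + 1) * b + s = n + b := by rw [hn2]
    rw [e1] at hc1
    rw [e2] at hc2
    rw [hc1, hc2]
  -- last visit before any position ≥ jA
  have hlastv : ∀ p, jA ≤ p → ∃ w s, (∀ t, t < L → z (w + t) = T t) ∧ s < gap w ∧ p = w + s := by
    intro p hp
    have hexd : ∃ d, d ≤ p - jA ∧ (∀ t, t < L → z (p - d + t) = T t) := by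
      refine ⟨p - jA, le_rfl, ?_⟩
      have e : p - (p - jA) = jA := by omega
      rw [e]; exact hjAv
    set d0 := Nat.find hexd with hd0def
    obtain ⟨hd1, hd2⟩ := Nat.find_spec hexd
    refine ⟨p - d0, d0, hd2, ?_, by omega⟩
    by_contra hge
    push_neg at hge
    have hg1 := (gap_spec (p - d0)).1
    have hgv := (gap_spec (p - d0)).2
    apply Nat.find_min hexd (m := d0 - gap (p - d0)) (by omega)
    constructor
    · omega
    · intro t ht
      have e : p - (d0 - gap (p - d0)) + t = p - d0 + gap (p - d0) + t := by omega
      rw [e]; exact hgv t ht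
  -- e_A = 1
  have heA : z (jA + (a - 1)) = 1 := by
    by_contra hcon
    have heA0 : z (jA + (a - 1)) = 0 := by
      rcases fin2_zero_or_one (z (jA + (a - 1))) with h | h
      · exact h
      · exact absurd h hcon
    obtain ⟨v, hv1, hv2, hv3, hv4, _⟩ := hmax (jA + 1)
    obtain ⟨w, s, hwvis, hws, hweq⟩ := hlastv (v - 1) (by omega)
    -- v - 1 = w + s, no visit strictly inside; v = w + s + 1 is a visit, so s + 1 = gap w
    have hvv : v = w + s + 1 := by omega
    have hsg : s + 1 = gap w := by
      rcases Nat.lt_or_ge (s + 1) (gap w) with hlt | hge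
      · exfalso
        apply noVisitIn w (s + 1) (by omega) hlt
        intro t ht
        have e : w + (s + 1) + t = v + t := by omega
        rw [e]; exact hv3 t ht
      · omega
    rcases fin2_zero_or_one (z (w + L)) with h0 | h1
    · have hrw := runA w hwvis h0
      have hga : gap w = a := hrw.1
      have hc := hrw.2 (a - 1) (by omega)
      -- z (v - 1) = z (w + (a-1)) = z (jA + (a-1)) = 0 but hv4 says 1
      have e : w + (a - 1) = v - 1 := by omega
      rw [e] at hc
      rw [hc, heA0] at hv4
      exact absurd hv4 (by decide)
    · have hrw := runB w hwvis h1
      have hgb : gap w = b := hrw.1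
      have hc := hrw.2 (b - 1) (by omega)
      have e : w + (b - 1) = v - 1 := by omega
      rw [e] at hc
      rw [hc, heB] at hv4
      exact absurd hv4 (by decide)
  -- injectivity of phase windows
  have inj : ∀ s s' (u v : ℕ), (∀ t, t < L → z (u + t) = T t) → (∀ t, t < L → z (v + t) = T t) →
      s < gap u → s' < gap v →
      winf z (L + 1) (u + s) = winf z (L + 1) (v + s') →
      s = s' ∧ winf z (L + 1) u = winf z (L + 1) v := by
    intro s
    induction s with
    | zero =>
      intro s' u v hu hv hs hs' heq
      have hs'0 : s' = 0 := by
        by_contra hs'ne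
        apply noVisitIn v s' (by omega) hs'
        intro t ht
        have h1 := congrFun heq ⟨t, by omega⟩
        simp only [winf] at h1
        have e : u + 0 + t = u + t := by omega
        rw [e] at h1
        rw [← h1]
        exact hu t ht
      subst hs'0
      have e : ∀ q : ℕ, q + 0 = q := fun q => rfl
      rw [e u, e v] at heq
      exact ⟨rfl, heq⟩
    | succ s ihs =>
      intro s' u v hu hv hs hs' heq
      rcases Nat.eq_zero_or_pos s' with hs'0 | hs'pos
      · exfalso
        subst hs'0
        apply noVisitIn u (s + 1) (by omega) hs
        intro t ht
        have h1 := congrFun heq ⟨t, by omega⟩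
        simp only [winf] at h1
        have e : v + 0 + t = v + t := by omega
        rw [e] at h1
        rw [h1]
        exact hv t ht
      · -- propagation
        have hpre : z (u + s) = z (v + (s' - 1)) := by
          by_contra hprene
          have hvisus : ∀ t, t < L → z (u + (s + 1) + t) = T t := by
            apply hls (u + (s + 1)) (v + s') (by omega) (by omega)
            · intro t ht
              have h1 := congrFun heq ⟨t, by omega⟩
              simp only [winf] at h1
              exact h1
            · intro hcon
              apply hprene
              have e1 : u + (s + 1) - 1 = u + s := by omega
              have e2 : v + s' - 1 = v + (s' - 1) := by omega
              rw [e1, e2] at hcon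
              exact hcon
          exact noVisitIn u (s + 1) (by omega) hs hvisus
        have heq' : winf z (L + 1) (u + s) = winf z (L + 1) (v + (s' - 1)) := by
          funext t
          show z (u + s + t.1) = z (v + (s' - 1) + t.1)
          rcases Nat.eq_zero_or_pos t.1 with h0 | h0
          · rw [h0]
            simpa using hpre
          · have h1 := congrFun heq ⟨t.1 - 1, by have := t.2; omega⟩
            simp only [winf] at h1
            have e1 : u + (s + 1) + (t.1 - 1) = u + s + t.1 := by omega
            have e2 : v + s' + (t.1 - 1) = v + (s' - 1) + t.1 := by omega
            rw [e1, e2] at h1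
            exact h1
        have hres := ihs (s' - 1) u v hu hv (by omega) (by omega) heq'
        exact ⟨by omega, hres.2⟩
  -- surjectivity of phase windows
  have hsurj : ∀ u ∈ FacT z (L + 1),
      (∃ s, s < a ∧ u = winf z (L + 1) (jA + s)) ∨
      (∃ s, s < b ∧ u = winf z (L + 1) (jB + s)) := by
    intro u hu
    obtain ⟨q, rfl⟩ := (mem_FacT z).mp hu
    obtain ⟨p, hp1, hp2⟩ := hrecur q (jA + 1)
    obtain ⟨w, s, hwvis, hws, hweq⟩ := hlastv p (by omega)
    have hwin_pq : winf z (L + 1) q = winf z (L + 1) p := by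
      funext t
      exact (hp2 t.1 t.2).symm
    rcases fin2_zero_or_one (z (w + L)) with h0 | h1
    · left
      have hrw := runA w hwvis h0
      refine ⟨s, by rw [← hrw.1]; exact hws, ?_⟩
      rw [hwin_pq]
      funext t
      show z (p + t.1) = z (jA + s + t.1)
      have hc := hrw.2 (s + t.1) (by have := t.2; rw [← hrw.1]; omega)
      have e1 : w + (s + t.1) = p + t.1 := by omega
      have e2 : jA + (s + t.1) = jA + s + t.1 := by omega
      rw [e1, e2] at hc
      exact hc
    · right
      have hrw := runB w hwvis h1
      refine ⟨s, by rw [← hrw.1]; exact hws, ?_⟩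
      rw [hwin_pq]
      funext t
      show z (p + t.1) = z (jB + s + t.1)
      have hc := hrw.2 (s + t.1) (by have := t.2; rw [← hrw.1]; omega)
      have e1 : w + (s + t.1) = p + t.1 := by omega
      have e2 : jB + (s + t.1) = jB + s + t.1 := by omega
      rw [e1, e2] at hc
      exact hc
  -- cardinality: a + b = L + 2
  have hAB : winf z (L + 1) jA ≠ winf z (L + 1) jB := by
    intro hcon
    have h1 := congrFun hcon ⟨L, by omega⟩
    simp only [winf] at h1
    rw [hjApost, hjBpost] at h1
    exact absurd h1 (by decide)
  have hcardphase : (FacT z (L + 1)).card = a + b := by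
    have himg : FacT z (L + 1) = Finset.image
        (fun s => if s < a then winf z (L + 1) (jA + s) else winf z (L + 1) (jB + (s - a)))
        (Finset.range (a + b)) := by
      ext u
      constructor
      · intro hu
        rcases hsurj u hu with ⟨s, hs, rfl⟩ | ⟨s, hs, rfl⟩
        · exact Finset.mem_image.mpr ⟨s, Finset.mem_range.mpr (Nat.lt_of_lt_of_le hs (Nat.le_add_right a b)), by rw [if_pos hs]⟩
        · refine Finset.mem_image.mpr ⟨a + s, Finset.mem_range.mpr (Nat.add_lt_add_left hs a), ?_⟩
          rw [if_neg (show ¬ (a + s < a) by omega)]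
          have e : a + s - a = s := by omega
          rw [e]
      · intro hu
        obtain ⟨s, _, rfl⟩ := Finset.mem_image.mp hu
        split
        · exact (mem_FacT z).mpr ⟨jA + s, rfl⟩
        · exact (mem_FacT z).mpr ⟨jB + (s - a), rfl⟩
    rw [himg, Finset.card_image_of_injOn, Finset.card_range]
    intro s hs s' hs' heq
    rw [Finset.mem_coe, Finset.mem_range] at hs hs'
    dsimp only at heq
    by_cases h1 : s < a <;> by_cases h2 : s' < a
    · rw [if_pos h1, if_pos h2] at heq
      exact (inj s s' jA jA hjAv hjAv h1 h2 heq).1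
    · rw [if_pos h1, if_neg h2] at heq
      exfalso
      have := (inj s (s' - a) jA jB hjAv hjBv h1 (by omega) heq).2
      exact hAB this
    · rw [if_neg h1, if_pos h2] at heq
      exfalso
      have := (inj (s - a) s' jB jA hjBv hjAv (by omega) h2 heq).2
      exact hAB this.symm
    · rw [if_neg h1, if_neg h2] at heq
      have := (inj (s - a) (s' - a) jB jB hjBv hjBv (by omega) (by omega) heq).1
      omega
  have hab : a + b = L + 2 := by
    rw [← hcardphase, hcount]
  -- small cases
  by_cases hA1 : a = 1
  · -- a = 1 kill
    rcases Nat.eq_zero_or_pos L with hL0 | hLpos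
    · -- L = 0 : z (jA + 0) both 0 and 1
      rw [hL0] at hjApost
      rw [hA1] at heA
      simp only [Nat.sub_self] at heA
      rw [Nat.add_zero] at hjApost heA
      rw [hjApost] at heA
      exact absurd heA (by decide)
    · have hT0 : T 0 = 1 := by
        rw [hA1] at heA
        simp only [Nat.sub_self, Nat.add_zero] at heA
        have := hjAv 0 (by omega)
        rw [Nat.add_zero] at this
        rw [← this]; exact heA
      have hvis1 : ∀ t, t < L → z (jA + 1 + t) = T t := by
        intro t ht
        have := hvisA2 t ht
        rw [hA1] at this
        exact this
      have hTL : T (L - 1) = 0 := by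
        have h1 := hvis1 (L - 1) (by omega)
        have e : jA + 1 + (L - 1) = jA + L := by omega
        rw [e, hjApost] at h1
        exact h1.symm
      have hconst : ∀ t, t < L → T t = T 0 := by
        intro t
        induction t with
        | zero => intro _; rfl
        | succ t iht =>
          intro ht
          have h1 := hjAv (t + 1) ht
          have h2 := hvis1 t (by omega)
          have e : jA + (t + 1) = jA + 1 + t := by omega
          rw [e] at h1
          rw [← h1, h2]
          exact iht (by omega)
      have := hconst (L - 1) (by omega)
      rw [hTL, hT0] at this
      exact absurd this (by decide)
  by_cases hB1 : b = 1
  · -- b = 1 kill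
    rcases Nat.eq_zero_or_pos L with hL0 | hLpos
    · rw [hL0] at hjBpost
      rw [hB1] at heB
      simp only [Nat.sub_self] at heB
      rw [Nat.add_zero] at hjBpost heB
      rw [hjBpost] at heB
      exact absurd heB (by decide)
    · have hT0 : T 0 = 0 := by
        rw [hB1] at heB
        simp only [Nat.sub_self, Nat.add_zero] at heB
        have := hjBv 0 (by omega)
        rw [Nat.add_zero] at this
        rw [← this]; exact heB
      have hvis1 : ∀ t, t < L → z (jB + 1 + t) = T t := by
        intro t ht
        have := hvisB2 t ht
        rw [hB1] at this
        exact this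
      have hTL : T (L - 1) = 1 := by
        have h1 := hvis1 (L - 1) (by omega)
        have e : jB + 1 + (L - 1) = jB + L := by omega
        rw [e, hjBpost] at h1
        exact h1.symm
      have hconst : ∀ t, t < L → T t = T 0 := by
        intro t
        induction t with
        | zero => intro _; rfl
        | succ t iht =>
          intro ht
          have h1 := hjBv (t + 1) ht
          have h2 := hvis1 t (by omega)
          have e : jB + (t + 1) = jB + 1 + t := by omega
          rw [e] at h1
          rw [← h1, h2]
          exact iht (by omega)
      have := hconst (L - 1) (by omega)
      rw [hTL, hT0] at this
      exact absurd this (by decide)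
  -- main case : 2 ≤ a, 2 ≤ b
  have ha2 : 2 ≤ a := by omega
  have hb2 : 2 ≤ b := by omega
  have hL2 : 2 ≤ L := by omega
  have pa : ∀ t, t + a ≤ a + b - 3 → T t = T (t + a) := by
    intro t ht
    have h1 := hvisA2 t (by omega)
    have h2 := hjAv (a + t) (by omega)
    have e : jA + a + t = jA + (a + t) := by omega
    rw [e] at h1
    rw [h2] at h1
    rw [← h1]
    congr 1
    omega
  have pb : ∀ t, t + b ≤ a + b - 3 → T t = T (t + b) := by
    intro t ht
    have h1 := hvisB2 t (by omega)
    have h2 := hjBv (b + t) (by omega)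
    have e : jB + b + t = jB + (b + t) := by omega
    rw [e] at h1
    rw [h2] at h1
    rw [← h1]
    congr 1
    omega
  have h1 : T (a - 1) = 1 := by
    have := hjAv (a - 1) (by omega)
    rw [← this]; exact heA
  have h3 : T (b - 1) = 0 := by
    have := hjBv (b - 1) (by omega)
    rw [← this]; exact heB
  have h4 : T (b - 2) = 0 := by
    have h0 := hvisA2 (b - 2) (by omega)
    have e : jA + a + (b - 2) = jA + L := by omega
    rw [e, hjApost] at h0
    exact h0.symm
  exact period_word_contra ha2 hb2 pa pb h1 h3 h4

theorem bal_of_sturmian' (x : ℕ → Fin 2)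
    (hap : ¬ ∃ p : ℕ, 1 ≤ p ∧ ∃ N : ℕ, ∀ n, N ≤ n → x (n + p) = x n)
    (hst : ∀ n : ℕ, Set.ncard {u : List (Fin 2) | ∃ i, u = factorAt x i n} = n + 1) :
    Bal x := by
  classical
  have hcard := card_bridge x hst
  by_contra hnb
  have hPex : ∃ m : ℕ, ∃ j j' : ℕ, S x j' m + 2 ≤ S x j m := by
    unfold Bal at hnb
    push_neg at hnb
    obtain ⟨m, j, j', h⟩ := hnb
    exact ⟨m, j, j', by omega⟩
  set N := Nat.find hPex with hNdef
  obtain ⟨jv, jv', hviol⟩ : ∃ j j' : ℕ, S x j' N + 2 ≤ S x j N := Nat.find_spec hPex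
  have hbelow : ∀ m, m < N → ∀ j j', S x j m ≤ S x j' m + 1 := by
    intro m hm j j'
    by_contra h
    exact Nat.find_min hPex hm ⟨j, j', by omega⟩
  have hN2 : 2 ≤ N := by
    by_contra h
    have h1 := S_le x jv N
    have h2 : S x jv' N + 2 ≤ N := le_trans hviol h1
    omega
  have hMex : ∃ jM, S x jM N = mu x N + 2 := by
    have h1 := mu_le x N jv'
    obtain ⟨j0, hj0⟩ := mu_exists x N
    have e1 := S_split x jv (show N - 1 ≤ N by omega)
    have hone : N - (N - 1) = 1 := by omega
    rw [hone, S_one] at e1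
    have e2 : S x j0 (N - 1) ≤ S x j0 N := S_le_of_le x j0 (by omega)
    have hb := hbelow (N - 1) (by omega) jv j0
    have hv := (x (jv + (N - 1))).is_lt
    exact ⟨jv, by omega⟩
  obtain ⟨jM, hjM⟩ := hMex
  obtain ⟨j1, hj1⟩ := mu_exists x N
  set L := N - 2 with hLdef
  set T : ℕ → Fin 2 := fun t => x (j1 + 1 + t) with hTdef
  have minw : ∀ p, S x p N = mu x N →
      (x p = 0 ∧ x (p + L + 1) = 0 ∧ ∀ t, t < L → x (p + 1 + t) = T t) := by
    intro p hp
    refine ⟨min_first x hbelow hN2 hjM hp, ?_, ?_⟩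
    · have h := min_last x hbelow hN2 hjM hp
      have e : p + (N - 1) = p + L + 1 := by omega
      rw [e] at h; exact h
    · intro t ht
      have h1 := min_letter x hbelow hjM hp (t + 1) (by omega) (by omega)
      have h2 := min_letter x hbelow hjM hj1 (t + 1) (by omega) (by omega)
      have e1 : p + (t + 1) = p + 1 + t := by omega
      have e2 : j1 + (t + 1) = j1 + 1 + t := by omega
      rw [e1] at h1; rw [e2] at h2
      have hvv : (x (p + 1 + t)).val = (x (j1 + 1 + t)).val := by omega
      exact Fin.ext hvv
  have maxw : ∀ p, S x p N = mu x N + 2 →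
      (x p = 1 ∧ x (p + L + 1) = 1 ∧ ∀ t, t < L → x (p + 1 + t) = T t) := by
    intro p hp
    refine ⟨max_first x hbelow hN2 hp, ?_, ?_⟩
    · have h := max_last x hbelow hN2 hp
      have e : p + (N - 1) = p + L + 1 := by omega
      rw [e] at h; exact h
    · intro t ht
      have h1 := max_letter x hbelow hp (t + 1) (by omega) (by omega)
      have h2 := min_letter x hbelow hjM hj1 (t + 1) (by omega) (by omega)
      have e1 : p + (t + 1) = p + 1 + t := by omega
      have e2 : j1 + (t + 1) = j1 + 1 + t := by omega
      rw [e1] at h1; rw [e2] at h2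
      have hvv : (x (p + 1 + t)).val = (x (j1 + 1 + t)).val := by omega
      exact Fin.ext hvv
  have hrecwin := recurrence x hap hcard
  have hSof : ∀ (m p q : ℕ), winf x m p = winf x m q → S x p m = S x q m := by
    intro m p q hw
    apply S_eq_of_letters x (k := m) _ m le_rfl
    intro t ht
    exact congrFun hw ⟨t, ht⟩
  have hminrec : ∀ p0, ∃ p, p0 ≤ p ∧ S x p N = mu x N := by
    intro p0
    obtain ⟨p, hp1, hp2⟩ := hrecwin N j1 p0
    exact ⟨p, hp1, by rw [hSof N p j1 hp2]; exact hj1⟩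
  have hmaxrec : ∀ p0, ∃ p, p0 ≤ p ∧ S x p N = mu x N + 2 := by
    intro p0
    obtain ⟨p, hp1, hp2⟩ := hrecwin N jM p0
    exact ⟨p, hp1, by rw [hSof N p jM hp2]; exact hjM⟩
  have hrecurx : ∀ q p0 : ℕ, ∃ p, p0 ≤ p ∧ ∀ t, t < L + 1 → x (p + t) = x (q + t) := by
    intro q p0
    obtain ⟨p, hp1, hp2⟩ := hrecwin (L + 1) q p0
    exact ⟨p, hp1, fun t ht => congrFun hp2 ⟨t, ht⟩⟩
  have hminpack : ∀ p0, ∃ j, p0 ≤ j ∧ 1 ≤ j ∧ (∀ t, t < L → x (j + t) = T t) ∧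
      x (j - 1) = 0 ∧ x (j + L) = 0 := by
    intro p0
    obtain ⟨p, hp1, hp2⟩ := hminrec p0
    obtain ⟨hA, hB, hC⟩ := minw p hp2
    refine ⟨p + 1, by omega, by omega, hC, by simpa using hA, ?_⟩
    have e : p + 1 + L = p + L + 1 := by omega
    rw [e]; exact hB
  have hmaxpack : ∀ p0, ∃ j, p0 ≤ j ∧ 1 ≤ j ∧ (∀ t, t < L → x (j + t) = T t) ∧
      x (j - 1) = 1 ∧ x (j + L) = 1 := by
    intro p0
    obtain ⟨p, hp1, hp2⟩ := hmaxrec p0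
    obtain ⟨hA, hB, hC⟩ := maxw p hp2
    refine ⟨p + 1, by omega, by omega, hC, by simpa using hA, ?_⟩
    have e : p + 1 + L = p + L + 1 := by omega
    rw [e]; exact hB
  have hTvis1 : ∀ t, t < L → x (j1 + 1 + t) = T t := fun t _ => rfl
  have hTvisM : ∀ t, t < L → x (jM + 1 + t) = T t := (maxw jM hjM).2.2
  have hTwin : winf x L (j1 + 1) = winf x L (jM + 1) := by
    funext t
    show x (j1 + 1 + t.1) = x (jM + 1 + t.1)
    rw [hTvis1 t.1 t.2, hTvisM t.1 t.2]
  have hdetpack : ∀ j j', (∀ t, t < L → x (j + t) = x (j' + t)) →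
      (¬ ∀ t, t < L → x (j + t) = T t) → x (j + L) = x (j' + L) := by
    intro j j' hw hnv
    by_contra hl
    have hwf : winf x L j = winf x L j' := funext fun t => hw t.1 t.2
    have hTne : winf x L j ≠ winf x L (j1 + 1) := by
      intro hcon
      apply hnv
      intro t ht
      exact congrFun hcon ⟨t, ht⟩
    have hl2 : x ((j1 + 1) + L) ≠ x ((jM + 1) + L) := by
      have hA := (minw j1 hj1).2.1
      have hB := (maxw jM hjM).2.1
      have e1 : j1 + 1 + L = j1 + L + 1 := by omega
      have e2 : jM + 1 + L = jM + L + 1 := by omega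
      rw [e1, e2, hA, hB]
      decide
    have := two_rs_jump x hwf hl hTwin hl2 hTne
    rw [hcard L, hcard (L + 1)] at this
    omega
  have hsuffull : ∀ u ∈ FacT x L, ∃ v ∈ FacT x (L + 1), suf L v = u := by
    intro u hu
    obtain ⟨q, rfl⟩ := (mem_FacT x).mp hu
    obtain ⟨p, hp1, hp2⟩ := hrecwin L q 1
    refine ⟨winf x (L + 1) (p - 1), (mem_FacT x).mpr ⟨p - 1, rfl⟩, ?_⟩
    rw [winf_suf]
    have e : p - 1 + 1 = p := by omega
    rw [e]; exact hp2
  have hlspack : ∀ j j', 1 ≤ j → 1 ≤ j' → (∀ t, t < L → x (j + t) = x (j' + t)) →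
      x (j - 1) ≠ x (j' - 1) → ∀ t, t < L → x (j + t) = T t := by
    intro j j' hj hj' hw hl
    by_contra hnv
    push_neg at hnv
    obtain ⟨t0, ht0, hne0⟩ := hnv
    have hwf : winf x L j = winf x L j' := funext fun t => hw t.1 t.2
    have hTne : winf x L j ≠ winf x L (j1 + 1) := by
      intro hcon
      exact hne0 (congrFun hcon ⟨t0, ht0⟩)
    have hl2 : x ((j1 + 1) - 1) ≠ x ((jM + 1) - 1) := by
      have hA := (minw j1 hj1).1
      have hB := (maxw jM hjM).1
      simp only [Nat.add_sub_cancel]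
      rw [hA, hB]
      decide
    have := two_ls_jump x L hsuffull hj hj' (by omega) (by omega) hwf hl hTwin hl2 hTne
    rw [hcard L, hcard (L + 1)] at this
    omega
  -- windows of length L+1 at pre-positions of visits with equal pre-letters agree
  have hwin01 : ∀ j j' : ℕ, 1 ≤ j → 1 ≤ j' → (∀ t, t < L → x (j + t) = T t) →
      (∀ t, t < L → x (j' + t) = T t) → x (j - 1) = x (j' - 1) →
      winf x (L + 1) (j - 1) = winf x (L + 1) (j' - 1) := by
    intro j j' hj hj' hv hv' hpre
    funext t
    show x (j - 1 + t.1) = x (j' - 1 + t.1)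
    rcases Nat.eq_zero_or_pos t.1 with h0 | h0
    · rw [h0]
      simpa using hpre
    · have ht : t.1 - 1 < L := by have := t.2; omega
      have e1 : j - 1 + t.1 = j + (t.1 - 1) := by omega
      have e2 : j' - 1 + t.1 = j' + (t.1 - 1) := by omega
      rw [e1, e2, hv _ ht, hv' _ ht]
  have hconflict : (∃ j, 1 ≤ j ∧ (∀ t, t < L → x (j + t) = T t) ∧ x (j - 1) = 0 ∧ x (j + L) = 1) →
      (∃ i, 1 ≤ i ∧ (∀ t, t < L → x (i + t) = T t) ∧ x (i - 1) = 1 ∧ x (i + L) = 0) → False := by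
    rintro ⟨j, hj, hvj, hprej, hpostj⟩ ⟨i, hi, hvi, hprei, hposti⟩
    obtain ⟨jm, _, hjm1, hjmv, hjmpre, hjmpost⟩ := hminpack 0
    obtain ⟨jx, _, hjx1, hjxv, hjxpre, hjxpost⟩ := hmaxpack 0
    have hw1 : winf x (L + 1) (j - 1) = winf x (L + 1) (jm - 1) :=
      hwin01 j jm hj hjm1 hvj hjmv (by rw [hprej, hjmpre])
    have hl1 : x ((j - 1) + (L + 1)) ≠ x ((jm - 1) + (L + 1)) := by
      have e1 : j - 1 + (L + 1) = j + L := by omega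
      have e2 : jm - 1 + (L + 1) = jm + L := by omega
      rw [e1, e2, hpostj, hjmpost]
      decide
    have hw2 : winf x (L + 1) (i - 1) = winf x (L + 1) (jx - 1) :=
      hwin01 i jx hi hjx1 hvi hjxv (by rw [hprei, hjxpre])
    have hl2 : x ((i - 1) + (L + 1)) ≠ x ((jx - 1) + (L + 1)) := by
      have e1 : i - 1 + (L + 1) = i + L := by omega
      have e2 : jx - 1 + (L + 1) = jx + L := by omega
      rw [e1, e2, hposti, hjxpost]
      decide
    have hne : winf x (L + 1) (j - 1) ≠ winf x (L + 1) (i - 1) := by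
      intro hcon
      have := congrFun hcon ⟨0, by omega⟩
      simp only [winf, Nat.add_zero] at this
      rw [hprej, hprei] at this
      exact absurd this (by decide)
    have := two_rs_jump x hw1 hl1 hw2 hl2 hne
    rw [hcard (L + 1), hcard (L + 1 + 1)] at this
    omega
  by_cases h10 : ∃ i, 1 ≤ i ∧ (∀ t, t < L → x (i + t) = T t) ∧ x (i - 1) = 1 ∧ x (i + L) = 0
  · -- corner (1,0) occurs; so corner (0,1) does not; flip
    have h01 : ∀ j, 1 ≤ j → (∀ t, t < L → x (j + t) = T t) → x (j - 1) = 0 → x (j + L) = 0 := by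
      intro j hj hv hpre
      by_contra hcon
      exact hconflict ⟨j, hj, hv, hpre, fin2_cases _ hcon⟩ h10
    set z : ℕ → Fin 2 := fun n => fl (x n) with hzdef
    have hvisz : ∀ j, (∀ t, t < L → z (j + t) = fl (T t)) ↔ (∀ t, t < L → x (j + t) = T t) := by
      intro j
      constructor
      · intro h t ht; exact fl_inj (h t ht)
      · intro h t ht; rw [hzdef]; simp only; rw [h t ht]
    have hwz : ∀ j j', (∀ t, t < L → z (j + t) = z (j' + t)) ↔
        (∀ t, t < L → x (j + t) = x (j' + t)) := by
      intro j j'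
      constructor
      · intro h t ht; exact fl_inj (h t ht)
      · intro h t ht; rw [hzdef]; simp only; rw [h t ht]
    apply caseA z L (fun t => fl (T t))
    · intro ⟨p, hp, N0, hN0⟩
      exact hap ⟨p, hp, N0, fun n hn => fl_inj (hN0 n hn)⟩
    · intro p0
      obtain ⟨j, ha, hb, hc, hd, he⟩ := hmaxpack p0
      refine ⟨j, ha, hb, (hvisz j).mpr hc, ?_, ?_⟩
      · rw [hzdef]; simp only; rw [hd]; decide
      · rw [hzdef]; simp only; rw [he]; decide
    · intro p0
      obtain ⟨j, ha, hb, hc, hd, he⟩ := hminpack p0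
      refine ⟨j, ha, hb, (hvisz j).mpr hc, ?_, ?_⟩
      · rw [hzdef]; simp only; rw [hd]; decide
      · rw [hzdef]; simp only; rw [he]; decide
    · intro j j' hw hnv
      have := hdetpack j j' ((hwz j j').mp hw) (fun h => hnv ((hvisz j).mpr h))
      rw [hzdef]; simp only; rw [this]
    · intro j j' hj hj' hw hpre
      refine (hvisz j).mpr ?_
      apply hlspack j j' hj hj' ((hwz j j').mp hw)
      intro hcon
      apply hpre
      rw [hzdef]; simp only; rw [hcon]
    · intro q p0
      obtain ⟨p, hp1, hp2⟩ := hrecurx q p0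
      refine ⟨p, hp1, fun t ht => ?_⟩
      rw [hzdef]; simp only; rw [hp2 t ht]
    · rw [hzdef, card_flip, hcard (L + 1)]
    · -- z-corner (1,0) absent
      intro j hj hv hpre
      have hxv := (hvisz j).mp hv
      have hxpre : x (j - 1) = 0 := by
        by_contra hcon
        have := fin2_cases _ hcon
        rw [hzdef] at hpre
        simp only at hpre
        rw [this] at hpre
        rw [fl1] at hpre
        exact absurd hpre (by decide)
      have := h01 j hj hxv hxpre
      rw [hzdef]; simp only; rw [this]; decide
  · -- corner (1,0) absent: apply caseA to x itself
    have hno10 : ∀ j, 1 ≤ j → (∀ t, t < L → x (j + t) = T t) → x (j - 1) = 1 → x (j + L) = 1 := by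
      intro j hj hv hpre
      by_contra hcon
      have h0 : x (j + L) = 0 := by
        rcases (by decide : ∀ c : Fin 2, c = 0 ∨ c = 1) (x (j + L)) with h | h
        · exact h
        · exact absurd h hcon
      exact h10 ⟨j, hj, hv, hpre, h0⟩
    exact caseA x L T hap hminpack hmaxpack hdetpack hlspack hrecurx (hcard (L + 1)) hno10


end SKB

namespace SKB

lemma cast_if_sum (x : ℕ → Fin 2) (w : List (Fin 2)) (j m : ℕ) :
    ((∑ s ∈ Finset.range m, if occ x w (j + s) then 1 else 0 : ℕ) : ℤ)
      = ∑ s ∈ Finset.range m, if occ x w (j + s) then (1:ℤ) else 0 := by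
  push_cast
  apply Finset.sum_congr rfl
  intro s _
  split <;> simp

theorem bal_of_sturmian (x : ℕ → Fin 2)
    (hap : ¬ ∃ p : ℕ, 1 ≤ p ∧ ∃ N : ℕ, ∀ n, N ≤ n → x (n + p) = x n)
    (hst : ∀ n : ℕ, Set.ncard {u : List (Fin 2) | ∃ i, u = factorAt x i n} = n + 1) :
    Bal x := bal_of_sturmian' x hap hst

end SKB


/-- Every Sturmian sequence (an aperiodic binary sequence with factor complexity
`p(n) = n + 1`) is `(k, k)`-balanced for every `k ≥ 1`. -/
theorem sturmian_k_k_balanced (x : ℕ → Fin 2)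
    (hap : ¬ ∃ p : ℕ, 1 ≤ p ∧ ∃ N : ℕ, ∀ n, N ≤ n → x (n + p) = x n)
    (hst : ∀ n : ℕ, factorComplexity x n = n + 1)
    (k : ℕ) (hk : 1 ≤ k) :
    ∀ u v : List (Fin 2), IsFactor x u → IsFactor x v → u.length = v.length →
      ∀ w : List (Fin 2), w.length = k →
        |(countOcc u w : ℤ) - (countOcc v w : ℤ)| ≤ k := by
  intro u v hu hv hlen w hwk
  obtain ⟨i, hui⟩ := hu
  obtain ⟨i', hvi⟩ := hv
  have hB : SKB.Bal x := SKB.bal_of_sturmian x hap (fun n => hst n)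
  obtain ⟨a, b, C, ha, hb, hrep⟩ := SKB.rep x hB w
  have h1 : countOcc u w
      = ∑ s ∈ Finset.range (u.length + 1 - w.length), (if SKB.occ x w (i + s) then 1 else 0) := by
    conv_lhs => rw [hui]
    rw [SKB.countOcc_factorAt x i u.length w]
  have h2 : countOcc v w
      = ∑ s ∈ Finset.range (u.length + 1 - w.length), (if SKB.occ x w (i' + s) then 1 else 0) := by
    conv_lhs => rw [hvi]
    rw [SKB.countOcc_factorAt x i' v.length w, hlen]
  rw [h1, h2, SKB.cast_if_sum, SKB.cast_if_sum]
  have := SKB.main_bound x hB ha hb w hrep i i' (u.length + 1 - w.length)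
  rw [← hwk]
  exact this
end

section
/- Let x be an infinite sequence and k ≥ 1. If the k-abelian complexity ρ_k of x is bounded above by a constant C, then x is (k, C − 1)-balanced: for all equal-length factors u, v of x and all words w of length k, ||u|_w − |v|_w| ≤ C − 1. -/
lemma countP_range_eq_sum (m : ℕ) (p : ℕ → Bool) :
    (List.range m).countP p = ∑ i ∈ Finset.range m, if p i then 1 else 0 := by
  induction m with
  | zero => simp
  | succ m ih =>
    rw [List.range_succ, Finset.sum_range_succ, List.countP_append, ih]
    simp [List.countP_cons]

lemma factorAt_drop_take {A : Type*} (x : ℕ → A) (t n i k : ℕ) (h : i + k ≤ n) :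
    ((factorAt x t n).drop i).take k = factorAt x (t + i) k := by
  apply List.ext_getElem
  · simp [factorAt]; omega
  · intro j h1 h2
    simp only [factorAt, List.getElem_take, List.getElem_drop, List.getElem_map,
      List.getElem_range]
    congr 1
    omega

lemma countOcc_factorAt {A : Type*} [DecidableEq A] (x : ℕ → A) (t n k : ℕ)
    (w : List A) (hw : w.length = k) :
    countOcc (factorAt x t n) w
      = ∑ i ∈ Finset.range (n + 1 - k), (if factorAt x (t + i) k = w then 1 else 0) := by
  have hlen : (factorAt x t n).length = n := by simp [factorAt]
  rw [countOcc, hlen, hw, countP_range_eq_sum]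
  refine Finset.sum_congr rfl (fun i hi => ?_)
  rw [Finset.mem_range] at hi
  have hik : i + k ≤ n := by omega
  rw [← hw, factorAt_drop_take x t n i w.length (by omega)]
  simp [hw]

lemma discrete_ivt (F : ℕ → ℕ)
    (hstep : ∀ t, F (t + 1) ≤ F t + 1 ∧ F t ≤ F (t + 1) + 1) :
    ∀ n i c, min (F i) (F (i + n)) ≤ c → c ≤ max (F i) (F (i + n)) → ∃ t, F t = c := by
  intro n
  induction n with
  | zero =>
    intro i c h1 h2
    simp only [Nat.add_zero] at h1 h2
    exact ⟨i, by omega⟩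
  | succ n ih =>
    intro i c h1 h2
    have e : i + 1 + n = i + (n + 1) := by omega
    rcases eq_or_ne (F i) c with h | h
    · exact ⟨i, h⟩
    · refine ih (i + 1) c ?_ ?_ <;>
        (rw [e]; have h3 := hstep i; omega)

lemma discrete_ivt' (F : ℕ → ℕ)
    (hstep : ∀ t, F (t + 1) ≤ F t + 1 ∧ F t ≤ F (t + 1) + 1)
    (i j c : ℕ) (h1 : min (F i) (F j) ≤ c) (h2 : c ≤ max (F i) (F j)) :
    ∃ t, F t = c := by
  rcases le_total i j with h | h
  · obtain ⟨d, rfl⟩ := Nat.exists_eq_add_of_le h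
    exact discrete_ivt F hstep d i c h1 h2
  · obtain ⟨d, rfl⟩ := Nat.exists_eq_add_of_le h
    exact discrete_ivt F hstep d j c (by omega) (by omega)

/-- If the `k`-abelian complexity of a sequence `x` is bounded above by `C`, then `x` is
`(k, C - 1)`-balanced. -/
theorem kBalanced_of_bounded_kAbComplexity {A : Type*} [Fintype A] [DecidableEq A]
    (x : ℕ → A) (k : ℕ) (hk : 1 ≤ k) (C : ℕ)
    (hbd : ∀ n : ℕ, kAbComplexity x k n ≤ C) :
    ∀ u v : List A, IsFactor x u → IsFactor x v → u.length = v.length →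
      ∀ w : List A, w.length = k →
        |(countOcc u w : ℤ) - (countOcc v w : ℤ)| ≤ (C : ℤ) - 1 := by
  intro u v hu hv huv w hw
  obtain ⟨i, hi⟩ := hu
  obtain ⟨j, hj⟩ := hv
  set n := u.length with hn
  have hvn : v.length = n := huv.symm
  rw [hvn] at hj
  set m := n + 1 - k with hm
  set g : ℕ → ℕ := fun s => if factorAt x s k = w then 1 else 0 with hg
  set F : ℕ → ℕ := fun t => ∑ p ∈ Finset.range m, g (t + p) with hF
  have hgb : ∀ s, g s ≤ 1 := by
    intro s; simp only [hg]; split <;> omega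
  have key : ∀ t, F t + g (t + m) = F (t + 1) + g t := by
    intro t
    have h1 : ∑ p ∈ Finset.range (m + 1), g (t + p) = F t + g (t + m) :=
      Finset.sum_range_succ _ m
    have h2 : ∑ p ∈ Finset.range (m + 1), g (t + p)
        = (∑ p ∈ Finset.range m, g (t + (p + 1))) + g (t + 0) :=
      Finset.sum_range_succ' _ m
    have h3 : ∑ p ∈ Finset.range m, g (t + (p + 1)) = F (t + 1) := by
      simp only [hF]
      refine Finset.sum_congr rfl (fun p _ => ?_)
      congr 1; omega
    simp only [Nat.add_zero] at h2
    omega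
  have hstep : ∀ t, F (t + 1) ≤ F t + 1 ∧ F t ≤ F (t + 1) + 1 := by
    intro t
    have := key t
    have := hgb t
    have := hgb (t + m)
    omega
  have hcF : ∀ t, countOcc (factorAt x t n) w = F t := by
    intro t
    rw [countOcc_factorAt x t n k w hw]
  have hcu : countOcc u w = F i := by rw [hi]; exact hcF i
  have hcv : countOcc v w = F j := by rw [hj]; exact hcF j
  -- finiteness
  have hFacFin : (Fac x n).Finite := by
    apply Set.Finite.subset (List.finite_length_eq A n)
    rintro z ⟨t, rfl⟩
    simp [factorAt]
  set T := kProfile k '' Fac x n with hT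
  have hTfin : T.Finite := hFacFin.image _
  set a := min (F i) (F j) with ha
  set b := max (F i) (F j) with hb
  have hsub : Set.Icc a b ⊆ (fun p => p w) '' T := by
    intro c hc
    simp only [Set.mem_Icc] at hc
    obtain ⟨t, ht⟩ := discrete_ivt' F hstep i j c (by omega) (by omega)
    have hwk : 1 ≤ w.length ∧ w.length ≤ k := by omega
    refine ⟨kProfile k (factorAt x t n), ⟨factorAt x t n, ⟨t, rfl⟩, rfl⟩, ?_⟩
    show (if 1 ≤ w.length ∧ w.length ≤ k then countOcc (factorAt x t n) w else 0) = c
    rw [if_pos hwk, hcF t, ht]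
  have h1 : (Set.Icc a b).ncard ≤ ((fun p => p w) '' T).ncard :=
    Set.ncard_le_ncard hsub (hTfin.image _)
  have h2 : ((fun p => p w) '' T).ncard ≤ T.ncard := Set.ncard_image_le hTfin
  have h3 : T.ncard ≤ C := hbd n
  have h4 : (Set.Icc a b).ncard = b + 1 - a := by
    rw [← Finset.coe_Icc, Set.ncard_coe_finset, Nat.card_Icc]
  have hab : a ≤ b := min_le_max
  have hfin : b + 1 - a ≤ C := by
    rw [← h4]; exact h1.trans (h2.trans h3)
  clear h1 h2 h3 h4 hsub hstep key hcF hgb hTfin hFacFin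
  rw [abs_le]
  omega
end
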